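/- arXiv:2107.01767 — 5 statements merged into one kernel-verified Lean document; each statement's English description precedes it below -/
import Mathlib

section
/- Let 1 ≤ l ≤ m ≤ n be integers. Then Σ_{k=1}^{n−l+1} #{π ∈ PF(m,n) : π_1 = k, π_2 = k+1, …, π_l = k+l−1} = (n−m+1)(n+1)^{m−l}. -/
open Finset

/-- Every entry lies in `{1, …, n}`. -/
def InRange (n : ℕ) (π : List ℕ) : Prop := ∀ x ∈ π, 1 ≤ x ∧ x ≤ n

/-- `π` is a parking function in `PF(π.length, n)`: all entries lie in `{1,…,n}` and
for every `i ≤ n`, at least `π.length + i - n` entries are `≤ i`. -/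
def IsPF (n : ℕ) (π : List ℕ) : Prop :=
  InRange n π ∧ ∀ i ≤ n, π.length + i - n ≤ π.countP (fun x => decide (x ≤ i))

/-- The parking process: each car `(a, b)` takes the first unoccupied spot in `[a, b]`;
returns the list of spots taken, or `none` if some car fails to park. -/
def parkAux : List (ℕ × ℕ) → Finset ℕ → Option (List ℕ)
  | [], _ => some []
  | c :: rest, occ =>
    if h : ((Finset.Icc c.1 c.2) \ occ).Nonempty then
      (parkAux rest (insert (((Finset.Icc c.1 c.2) \ occ).min' h) occ)).map
        (fun t => ((Finset.Icc c.1 c.2) \ occ).min' h :: t)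
    else none

/-- Outcome (list of spots taken, car by car) of the classical parking process with `n` spots. -/
def outcome (n : ℕ) (π : List ℕ) : Option (List ℕ) :=
  parkAux (π.map (fun p => (p, n))) ∅

/-- The `i`-th (1-indexed) unattempted spot of `π`, equivalently the `i`-th smallest
spot left unoccupied by the parking process. -/
def kspot (n : ℕ) (π : List ℕ) (i : ℕ) : ℕ :=
  (((Finset.Icc 1 n) \ ((outcome n π).getD []).toFinset).sort (· ≤ ·)).getD (i - 1) 0

/-- Spot (a value in `{1,…,n}`) in which car `i` (0-indexed) parks. -/
def outcomeCoord (n : ℕ) (π : List ℕ) (i : ℕ) : ℕ := ((outcome n π).getD []).getD i 0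

/-- Preference list (with values in `{1,…,n}`) associated to `π : Fin m → Fin n`. -/
def toPref {m n : ℕ} (π : Fin m → Fin n) : List ℕ := List.ofFn (fun k => (π k : ℕ) + 1)

/-- The `i`-th (0-indexed) preference, as a value in `{1,…,n}`. -/
def coord {m n : ℕ} (π : Fin m → Fin n) (i : ℕ) : ℕ :=
  if h : i < m then (π ⟨i, h⟩ : ℕ) + 1 else 0

open scoped Classical in
/-- The finite set of parking functions `PF(m, n)`. -/
noncomputable def PFset (m n : ℕ) : Finset (Fin m → Fin n) :=
  Finset.univ.filter (fun π => IsPF n (toPref π))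

/-- Expectation with respect to the uniform measure on `PF(m, n)`. -/
noncomputable def pfE (m n : ℕ) (f : (Fin m → Fin n) → ℝ) : ℝ :=
  (∑ π ∈ PFset m n, f π) / ((PFset m n).card : ℝ)

/-- Variance with respect to the uniform measure on `PF(m, n)`. -/
noncomputable def pfVar (m n : ℕ) (f : (Fin m → Fin n) → ℝ) : ℝ :=
  pfE m n (fun π => f π ^ 2) - (pfE m n f) ^ 2

/-- Covariance with respect to the uniform measure on `PF(m, n)`. -/
noncomputable def pfCov (m n : ℕ) (f g : (Fin m → Fin n) → ℝ) : ℝ :=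
  pfE m n (fun π => f π * g π) - pfE m n f * pfE m n g

/-- `π` is a `u`-parking function of length `r`: it consists of positive integers whose
non-decreasing rearrangement `lam` satisfies `lam i ≤ u i` for all `i`. -/
def IsUPF (r : ℕ) (u : Fin r → ℕ) (π : List ℕ) : Prop :=
  π.length = r ∧ (∀ x ∈ π, 1 ≤ x) ∧
    ∃ lam : List ℕ, π.Perm lam ∧ lam.Pairwise (· ≤ ·) ∧ ∀ i : Fin r, lam.getD i.val 0 ≤ u i

/-- `(a, b)` is an interval parking function in `IPF(a.length, n)`: car `i` is willing to
park only in the interval `[a i, b i]`, and all cars park successfully. -/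
def IsIPF (n : ℕ) (a b : List ℕ) : Prop :=
  a.length = b.length ∧ InRange n a ∧ InRange n b ∧ List.Forall₂ (· ≤ ·) a b ∧
    (parkAux (a.zip b) ∅).isSome = true

open scoped Classical in
/-- The finite set of interval parking functions `IPF(m, n)`. -/
noncomputable def IPFset (m n : ℕ) : Finset ((Fin m → Fin n) × (Fin m → Fin n)) :=
  Finset.univ.filter (fun ab => IsIPF n (toPref ab.1) (toPref ab.2))

/-!
Following Pollak, read preferences as residues modulo `n + 1`, i.e. as spots on a circle with
one extra spot. By the cycle lemma, applied to the numbers of cars preferring each spot, exactly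
`n + 1 - m` of the `n + 1` rotations `σ + j` of any `σ : Fin m → ZMod (n + 1)` are parking
functions. Tuples whose first `l` entries form a block `a, a + 1, …, a + l - 1` are permuted by
rotations, and for fixed `a` there are `(n + 1) ^ (m - l)` of them; double counting gives
`(n + 1) ^ (m - l) * (n + 1 - m)` parking functions with an initial block, summed over `a`.
A parking function never uses the spot `n`, so only blocks with `a + l - 1 < n` occur, and these
are the blocks `k, …, k + l - 1` of the statement with `k = a + 1`.

The cycle lemma itself is proved with records of the prefix sums of the periodic sequence
`c - 1`: its steps are `≥ -1`, so each record lowers the running minimum by exactly one, and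
over one period the minimum drops by `p - ∑ c`.
-/

section CycleLemma

variable (f : ℕ → ℤ)

def prefixSum (x : ℕ) : ℤ := ∑ y ∈ range x, f y

def prefixMin : ℕ → ℤ
  | 0 => 0
  | x + 1 => min (prefixMin x) (prefixSum f (x + 1))

variable {f}

lemma prefixMin_le_prefixSum {x y : ℕ} (h : y ≤ x) : prefixMin f x ≤ prefixSum f y := by
  induction x with
  | zero => simp [Nat.le_zero.mp h, prefixMin, prefixSum]
  | succ x ih =>
    rcases h.lt_or_eq with h | rfl
    · exact (min_le_left _ _).trans (ih (Nat.lt_succ_iff.mp h))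
    · exact min_le_right _ _

lemma exists_prefixSum_eq_prefixMin (x : ℕ) : ∃ y ≤ x, prefixSum f y = prefixMin f x := by
  induction x with
  | zero => exact ⟨0, le_rfl, by simp [prefixMin, prefixSum]⟩
  | succ x ih =>
    obtain ⟨y, hy, hM⟩ := ih
    rcases min_choice (prefixMin f x) (prefixSum f (x + 1)) with h | h
    · exact ⟨y, hy.trans x.le_succ, hM.trans h.symm⟩
    · exact ⟨x + 1, le_rfl, h.symm⟩

lemma prefixMin_succ (hf : ∀ x, -1 ≤ f x) (x : ℕ) :
    prefixMin f (x + 1) =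
      if prefixSum f (x + 1) < prefixMin f x then prefixMin f x - 1 else prefixMin f x := by
  have hle := prefixMin_le_prefixSum (f := f) (le_refl x)
  have hstep : prefixSum f (x + 1) = prefixSum f x + f x := sum_range_succ f x
  have := hf x
  show min _ _ = _
  split_ifs <;> omega

lemma card_filter_prefixSum_lt_prefixMin (hf : ∀ x, -1 ≤ f x) {a b : ℕ} (hab : a ≤ b) :
    (#{x ∈ Ico a b | prefixSum f (x + 1) < prefixMin f x} : ℤ) =
      prefixMin f a - prefixMin f b := by
  induction b, hab using Nat.le_induction with
  | base => simp
  | succ b hab ih =>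
    rw [Nat.Ico_succ_right_eq_insert_Ico hab, filter_insert, prefixMin_succ hf]
    split_ifs
    · rw [card_insert_of_notMem (by simp), Nat.cast_succ, ih]
      ring
    · rw [ih]

lemma sum_range_eq_prefixSum_sub {x L : ℕ} (hL : L ≤ x + 1) :
    ∑ d ∈ range L, f (x - d) = prefixSum f (x + 1) - prefixSum f (x + 1 - L) := by
  rw [prefixSum, prefixSum, ← sum_Ico_eq_sub _ (by omega), sum_Ico_eq_sum_range,
    ← sum_range_reflect, show x + 1 - (x + 1 - L) = L by omega]
  exact sum_congr rfl fun d hd => by rw [mem_range] at hd; congr 1; omega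

lemma prefixSum_add_period {p : ℕ} (hper : Function.Periodic f p) (x : ℕ) :
    prefixSum f (x + p) = prefixSum f x + prefixSum f p := by
  rw [prefixSum, add_comm x p, sum_range_add, add_comm (prefixSum f x)]
  exact congrArg _ (sum_congr rfl fun y _ => by rw [add_comm, hper])

lemma prefixMin_two_mul {p : ℕ} (hper : Function.Periodic f p) (hneg : prefixSum f p ≤ 0) :
    prefixMin f (2 * p) = prefixMin f p + prefixSum f p := by
  apply le_antisymm
  · obtain ⟨y, hy, hM⟩ := exists_prefixSum_eq_prefixMin (f := f) p
    calc prefixMin f (2 * p) ≤ prefixSum f (y + p) := prefixMin_le_prefixSum (by omega)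
      _ = _ := by rw [prefixSum_add_period hper, hM]
  · obtain ⟨y, hy, hM⟩ := exists_prefixSum_eq_prefixMin (f := f) (2 * p)
    rw [← hM]
    rcases le_total y p with h | h
    · linarith [prefixMin_le_prefixSum (f := f) h]
    · obtain ⟨z, rfl⟩ : ∃ z, y = z + p := ⟨y - p, by omega⟩
      rw [prefixSum_add_period hper]
      linarith [prefixMin_le_prefixSum (f := f) (show z ≤ p by omega)]

/-- Going back a full period does not lower the prefix sum, so a new record only has to be
checked against the last `p` prefix sums. -/
lemma forall_sum_range_neg_iff {p : ℕ} (hper : Function.Periodic f p) (hp : 0 < p)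
    (hneg : prefixSum f p ≤ 0) {x : ℕ} (hx : p ≤ x + 1) :
    (∀ L, 1 ≤ L → L ≤ p → ∑ d ∈ range L, f (x - d) < 0) ↔
      prefixSum f (x + 1) < prefixMin f x := by
  constructor
  · intro h
    suffices key : ∀ e y, x - y = e → y ≤ x → prefixSum f (x + 1) < prefixSum f y by
      obtain ⟨y, hy, hM⟩ := exists_prefixSum_eq_prefixMin (f := f) x
      exact hM ▸ key _ y rfl hy
    intro e
    induction e using Nat.strong_induction_on with
    | _ e ih =>
      intro y he hy
      by_cases hyp : x + 1 - y ≤ p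
      · have := h (x + 1 - y) (by omega) hyp
        rw [sum_range_eq_prefixSum_sub (by omega), show x + 1 - (x + 1 - y) = y by omega] at this
        linarith
      · have := ih (x - (y + p)) (by omega) (y + p) rfl (by omega)
        rw [prefixSum_add_period hper] at this
        linarith
  · intro h L hL hLp
    rw [sum_range_eq_prefixSum_sub (by omega)]
    linarith [prefixMin_le_prefixSum (f := f) (show x + 1 - L ≤ x by omega)]

theorem card_filter_forall_sum_range_neg {p : ℕ} (hper : Function.Periodic f p)
    (hf : ∀ x, -1 ≤ f x) (hp : 0 < p) (hneg : prefixSum f p ≤ 0) :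
    (#{x ∈ Ico p (2 * p) | ∀ L, 1 ≤ L → L ≤ p → ∑ d ∈ range L, f (x - d) < 0} : ℤ) =
      -prefixSum f p := by
  rw [filter_congr fun x hx =>
      forall_sum_range_neg_iff hper hp hneg (by rw [mem_Ico] at hx; omega),
    card_filter_prefixSum_lt_prefixMin hf (by omega), prefixMin_two_mul hper hneg]
  ring

end CycleLemma

lemma ZMod.sum_range_natCast {M : Type*} [AddCommMonoid M] {p : ℕ} [NeZero p]
    (g : ZMod p → M) : ∑ x ∈ range p, g x = ∑ v, g v :=
  sum_nbij' (fun x => (x : ZMod p)) ZMod.val (by simp) (by simp [ZMod.val_lt])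
    (fun x hx => ZMod.val_natCast_of_lt (mem_range.mp hx)) (fun v _ => ZMod.natCast_zmod_val v)
    (fun _ _ => rfl)

lemma ZMod.card_filter_Ico_natCast {p : ℕ} [NeZero p] (P : ZMod p → Prop) [DecidablePred P] :
    #{x ∈ Ico p (2 * p) | P (x : ℕ)} = #{w | P w} := by
  refine card_nbij' (fun x : ℕ => (x : ZMod p)) (fun w => p + w.val) ?_ ?_ ?_ ?_
  · intro x hx
    simp_all
  · intro w hw
    simp only [coe_filter, mem_univ, true_and, Set.mem_ofPred_eq, mem_Ico] at hw ⊢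
    have := ZMod.val_lt w
    exact ⟨⟨by omega, by omega⟩, by simpa using hw⟩
  · intro x hx
    simp only [coe_filter, mem_Ico, Set.mem_ofPred_eq] at hx
    show p + (x : ZMod p).val = x
    rw [ZMod.val_natCast, Nat.mod_eq_sub_mod hx.1.1, Nat.mod_eq_of_lt (by omega)]
    omega
  · intro w _
    simp

/-- The cycle lemma, for a circle of `p` points carrying `c v` items at the point `v`. -/
theorem card_filter_forall_sum_range_lt {p : ℕ} [NeZero p] (c : ZMod p → ℕ)
    (hc : ∑ v, c v ≤ p) :
    #{w : ZMod p | ∀ L : ℕ, 1 ≤ L → L ≤ p → ∑ d ∈ range L, c (w - d) < L} = p - ∑ v, c v := by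
  set f : ℕ → ℤ := fun x => c x - 1
  have hper : Function.Periodic f p := fun x => by simp [f]
  have hsum : prefixSum f p = ∑ v, c v - p := by
    simp [prefixSum, f, sum_sub_distrib, ZMod.sum_range_natCast (fun v => (c v : ℤ))]
  have hwindow : ∀ x L, L ≤ x + 1 →
      ∑ d ∈ range L, f (x - d) = ((∑ d ∈ range L, c ((x : ZMod p) - d) : ℕ) : ℤ) - L := by
    intro x L hL
    simp only [f, sum_sub_distrib, sum_const, card_range, nsmul_eq_mul, mul_one, Nat.cast_sum]
    congr 1
    exact sum_congr rfl fun d hd => by rw [Nat.cast_sub (by rw [mem_range] at hd; omega)]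
  have hmem : ∀ x ∈ Ico p (2 * p), (∀ L : ℕ, 1 ≤ L → L ≤ p → ∑ d ∈ range L, f (x - d) < 0) ↔
      ∀ L : ℕ, 1 ≤ L → L ≤ p → ∑ d ∈ range L, c ((x : ZMod p) - d) < L := fun x hx =>
    forall_congr' fun L => imp_congr_right fun _ => imp_congr_right fun hL => by
      rw [mem_Ico] at hx
      rw [hwindow x L (by omega), sub_neg, Nat.cast_lt]
  have key := card_filter_forall_sum_range_neg hper (fun x => by simp only [f]; omega)
    (Nat.pos_of_neZero p) (by omega)
  rw [hsum, neg_sub, filter_congr hmem] at key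
  rw [← ZMod.card_filter_Ico_natCast]
  omega

section Pollak

/-- Preferences are read through `ZMod.val` in `{0, …, n}`; the case `i = n` excludes the
value `n`. -/
def IsPFMod (n : ℕ) {m : ℕ} (σ : Fin m → ZMod (n + 1)) : Prop :=
  ∀ i ≤ n, m + i - n ≤ #{t | (σ t).val < i}

variable {m n : ℕ}

instance (σ : Fin m → ZMod (n + 1)) : Decidable (IsPFMod n σ) :=
  inferInstanceAs (Decidable (∀ i ≤ n, _))

lemma IsPFMod.val_lt {σ : Fin m → ZMod (n + 1)} (hσ : IsPFMod n σ) (t : Fin m) :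
    (σ t).val < n := by
  have h := hσ n le_rfl
  rw [Nat.add_sub_cancel] at h
  exact (mem_filter.mp ((card_filter_eq_iff.mp
    (le_antisymm (card_filter_le _ _) (by simpa using h))) t (mem_univ t))).2

lemma isPFMod_iff_forall_card_filter_lt (τ : Fin m → ZMod (n + 1)) :
    IsPFMod n τ ↔
      ∀ L : ℕ, 1 ≤ L → L ≤ n + 1 → #{t | ((n : ZMod (n + 1)) - τ t).val < L} < L := by
  have hwindow : ∀ L,
      #{t | ((n : ZMod (n + 1)) - τ t).val < L} = #{t | ¬ (τ t).val < n + 1 - L} := by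
    intro L
    congr 1
    refine filter_congr fun t _ => ?_
    have hn : (n : ZMod (n + 1)).val = n := ZMod.val_natCast_of_lt n.lt_succ_self
    have ht := ZMod.val_lt (τ t)
    rw [ZMod.val_sub (by omega), hn]
    omega
  have hsplit : ∀ i, #{t | (τ t).val < i} + #{t | ¬ (τ t).val < i} = m := fun i => by
    rw [card_filter_add_card_filter_not, card_univ, Fintype.card_fin]
  simp only [hwindow]
  constructor
  · intro h L hL hLn
    have := h (n + 1 - L) (by omega)
    have := hsplit (n + 1 - L)
    omega
  · intro h i hi
    have := h (n + 1 - i) (by omega) (by omega)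
    have := hsplit i
    rw [show n + 1 - (n + 1 - i) = i by omega] at *
    omega

lemma sum_range_card_filter_eq_sub (σ : Fin m → ZMod (n + 1)) (w : ZMod (n + 1)) {L : ℕ}
    (hL : L ≤ n + 1) :
    ∑ d ∈ range L, #{t | σ t = w - d} = #{t | (w - σ t).val < L} := by
  rw [card_eq_sum_card_fiberwise (f := fun t => (w - σ t).val) (t := range L)
    (fun t ht => by simpa using ht)]
  refine sum_congr rfl fun d hd => ?_
  have hdL := mem_range.mp hd
  have hval : ((d : ℕ) : ZMod (n + 1)).val = d := ZMod.val_natCast_of_lt (hdL.trans_le hL)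
  rw [filter_filter]
  refine congrArg card (filter_congr fun t _ => ?_)
  rw [(ZMod.val_injective _).eq_iff' hval]
  constructor
  · intro h
    exact ⟨by rwa [h, sub_sub_cancel, hval], by rw [h, sub_sub_cancel]⟩
  · rintro ⟨-, h⟩
    rw [← h, sub_sub_cancel]

/-- Pollak's circular argument: the rotation `σ + j` is parking iff every arc of the circle
ending at `n - j` is preferred by fewer cars than it has spots. -/
theorem card_filter_isPFMod_add (hmn : m ≤ n) (σ : Fin m → ZMod (n + 1)) :
    #{j | IsPFMod n fun t => σ t + j} = n + 1 - m := by
  set c : ZMod (n + 1) → ℕ := fun v => #{t | σ t = v}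
  have hc : ∑ v, c v = m := by
    rw [← card_eq_sum_card_fiberwise (fun t _ => mem_univ (σ t)), card_univ, Fintype.card_fin]
  rw [show n + 1 - m = n + 1 - ∑ v, c v by rw [hc],
    ← card_filter_forall_sum_range_lt c (by omega)]
  refine card_equiv (Equiv.subLeft (n : ZMod (n + 1))) fun j => ?_
  simp only [mem_filter, mem_univ, true_and, isPFMod_iff_forall_card_filter_lt, Equiv.subLeft_apply]
  refine forall_congr' fun L => imp_congr_right fun _ => forall_congr' fun hL => ?_
  rw [sum_range_card_filter_eq_sub σ _ hL]
  simp only [sub_add_eq_sub_sub_swap]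

end Pollak

section Block

variable {m p : ℕ} [NeZero p]

def blockSet (l : ℕ) (a : ZMod p) : Finset (Fin m → ZMod p) :=
  Fintype.piFinset fun t => if (t : ℕ) < l then {a + t} else univ

lemma mem_blockSet {l : ℕ} {a : ZMod p} {τ : Fin m → ZMod p} :
    τ ∈ blockSet l a ↔ ∀ t : Fin m, (t : ℕ) < l → τ t = a + t := by
  simp only [blockSet, Fintype.mem_piFinset]
  refine forall_congr' fun t => ?_
  split_ifs with h <;> simp [h]

lemma card_blockSet (l : ℕ) (a : ZMod p) :
    #(blockSet l a : Finset (Fin m → ZMod p)) = p ^ (m - l) := by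
  rw [blockSet, Fintype.card_piFinset]
  simp only [apply_ite card, card_singleton, card_univ, ZMod.card]
  rw [Fin.prod_univ_eq_prod_range (fun i => if i < l then 1 else p), prod_ite, prod_const_one,
    one_mul, prod_const, ← Nat.card_Ico l m]
  congr 2
  ext i
  simp only [mem_filter, mem_range, mem_Ico]
  omega

lemma add_mem_blockSet_iff {l : ℕ} {a : ZMod p} {τ : Fin m → ZMod p} (j : ZMod p) :
    (fun t => τ t + j) ∈ blockSet l (a + j) ↔ τ ∈ blockSet l a := by
  simp only [mem_blockSet, add_right_comm a j, add_left_inj]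

end Block

/-- Rotating by `a` carries `blockSet l 0` onto `blockSet l a`, so the sum counts the pairs
`(σ, a)` with `σ ∈ blockSet l 0` and `σ + a` parking. -/
theorem sum_card_filter_blockSet_isPFMod {l m n : ℕ} (hmn : m ≤ n) :
    ∑ a : ZMod (n + 1), #{τ ∈ (blockSet l a : Finset (Fin m → _)) | IsPFMod n τ} =
      (n + 1) ^ (m - l) * (n + 1 - m) := by
  have hrotate : ∀ a : ZMod (n + 1), #{τ ∈ (blockSet l a : Finset (Fin m → _)) | IsPFMod n τ} =
      #{σ ∈ blockSet l 0 | IsPFMod n fun t => σ t + a} := fun a =>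
    (card_equiv (Equiv.addRight fun _ => a) fun σ => by
      rw [mem_filter, mem_filter, Equiv.coe_addRight, ← add_mem_blockSet_iff a, zero_add]
      rfl).symm
  calc _ = ∑ a, #{σ ∈ (blockSet l 0 : Finset (Fin m → _)) | IsPFMod n fun t => σ t + a} :=
        sum_congr rfl fun a _ => hrotate a
    _ = ∑ σ ∈ (blockSet l 0 : Finset (Fin m → _)), #{a | IsPFMod n fun t => σ t + a} := by
        simp only [card_filter]
        exact sum_comm
    _ = _ := by
        rw [sum_congr rfl fun σ _ => card_filter_isPFMod_add hmn σ, sum_const, card_blockSet,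
          smul_eq_mul]

lemma filter_blockSet_isPFMod_eq_empty {l m n : ℕ} (hlm : l ≤ m) {a : ZMod (n + 1)}
    (ha : n - l < a.val) : {τ ∈ (blockSet l a : Finset (Fin m → _)) | IsPFMod n τ} = ∅ := by
  have hle : a.val ≤ n := Nat.lt_succ_iff.mp (ZMod.val_lt a)
  refine filter_eq_empty_iff.mpr fun τ hτ hpf => ?_
  have hi : n - a.val < m := by omega
  have hτi := mem_blockSet.mp hτ ⟨n - a.val, hi⟩ (by dsimp only; omega)
  have hv := hpf.val_lt ⟨n - a.val, hi⟩
  rw [hτi, Nat.cast_sub hle, ZMod.natCast_zmod_val, add_sub_cancel,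
    ZMod.val_natCast_of_lt n.lt_succ_self] at hv
  exact lt_irrefl n hv

section Transfer

variable {l m n : ℕ}

def toZMod (π : Fin m → Fin n) : Fin m → ZMod (n + 1) := fun t => ((π t : ℕ) : ZMod (n + 1))

lemma val_toZMod (π : Fin m → Fin n) (t : Fin m) : (toZMod π t).val = π t :=
  ZMod.val_natCast_of_lt (Nat.lt_succ_of_lt (π t).isLt)

lemma toZMod_injective : Function.Injective (toZMod : (Fin m → Fin n) → _) :=
  fun π π' h => funext fun t => Fin.ext <| by rw [← val_toZMod, h, val_toZMod]

lemma exists_toZMod_eq {τ : Fin m → ZMod (n + 1)} (hτ : IsPFMod n τ) : ∃ π, toZMod π = τ :=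
  ⟨fun t => ⟨(τ t).val, hτ.val_lt t⟩, funext fun t => ZMod.natCast_zmod_val (τ t)⟩

lemma countP_ofFn (f : Fin m → ℕ) (P : ℕ → Prop) [DecidablePred P] :
    (List.ofFn f).countP (fun x => decide (P x)) = #{t | P (f t)} := by
  rw [List.ofFn_eq_map, List.countP_map, Fin.univ_def, card_def, filter_val,
    ← Multiset.countP_eq_card_filter, Multiset.coe_countP]
  rfl

lemma isPF_toPref_iff (π : Fin m → Fin n) : IsPF n (toPref π) ↔ IsPFMod n (toZMod π) := by
  have hrange : InRange n (toPref π) := by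
    simp only [InRange, toPref, List.mem_ofFn]
    rintro _ ⟨t, rfl⟩
    exact ⟨by omega, (π t).isLt⟩
  rw [IsPF, and_iff_right hrange]
  simp only [IsPFMod, toPref, List.length_ofFn, countP_ofFn, val_toZMod, Nat.add_one_le_iff]

lemma coord_eq {π : Fin m → Fin n} {i : ℕ} (h : i < m) : coord π i = π ⟨i, h⟩ + 1 := dif_pos h

lemma forall_coord_eq_iff_mem_blockSet (hlm : l ≤ m) (hln : l ≤ n) {k : ℕ}
    (hk : k ∈ Icc 1 (n - l + 1)) (π : Fin m → Fin n) :
    (∀ i : Fin l, coord π i = k + i) ↔ toZMod π ∈ blockSet l ((k - 1 : ℕ) : ZMod (n + 1)) := by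
  rw [mem_Icc] at hk
  rw [mem_blockSet]
  constructor
  · intro h t ht
    have := h ⟨t, ht⟩
    simp only [coord_eq t.isLt, Fin.eta] at this
    rw [toZMod, ← Nat.cast_add, show (π t : ℕ) = k - 1 + t by omega]
  · intro h i
    have hi : k - 1 + (i : ℕ) < n + 1 := by omega
    have ht := h ⟨i, by omega⟩ i.isLt
    dsimp only at ht
    rw [toZMod, ← Nat.cast_add, ZMod.natCast_eq_natCast_iff',
      Nat.mod_eq_of_lt (Nat.lt_succ_of_lt (π _).isLt), Nat.mod_eq_of_lt hi] at ht
    rw [coord_eq (by omega)]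
    omega

lemma card_filter_forall_coord_eq (hlm : l ≤ m) (hln : l ≤ n) {k : ℕ}
    (hk : k ∈ Icc 1 (n - l + 1)) :
    #{π ∈ PFset m n | ∀ i : Fin l, coord π i = k + i} =
      #{τ ∈ (blockSet l ((k - 1 : ℕ) : ZMod (n + 1)) : Finset (Fin m → _)) | IsPFMod n τ} := by
  refine card_bij (fun π _ => toZMod π) (fun π hπ => ?_) (fun _ _ _ _ h => toZMod_injective h) ?_
  · simp only [PFset, mem_filter, mem_univ, true_and] at hπ ⊢
    exact ⟨(forall_coord_eq_iff_mem_blockSet hlm hln hk π).mp hπ.2, (isPF_toPref_iff π).mp hπ.1⟩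
  · intro τ hτ
    rw [mem_filter] at hτ
    obtain ⟨π, rfl⟩ := exists_toZMod_eq hτ.2
    refine ⟨π, ?_, rfl⟩
    simp only [PFset, mem_filter, mem_univ, true_and]
    exact ⟨(isPF_toPref_iff π).mpr hτ.2, (forall_coord_eq_iff_mem_blockSet hlm hln hk π).mpr hτ.1⟩

end Transfer

lemma sum_Icc_natCast_sub_one {M : Type*} [AddCommMonoid M] {n N : ℕ} (hN : N ≤ n + 1)
    (g : ZMod (n + 1) → M) (hg : ∀ a : ZMod (n + 1), N ≤ a.val → g a = 0) :
    ∑ k ∈ Icc 1 N, g ((k - 1 : ℕ)) = ∑ a, g a := by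
  calc ∑ k ∈ Icc 1 N, g ((k - 1 : ℕ)) = ∑ x ∈ range N, g x := by
        rw [← Ico_add_one_right_eq_Icc, sum_Ico_eq_sum_range]
        simp
    _ = ∑ x ∈ range (n + 1), g x :=
        sum_subset (range_subset_range.mpr hN) fun x hx hxN => hg _ <| by
          rw [ZMod.val_natCast_of_lt (mem_range.mp hx)]
          simpa using hxN
    _ = ∑ a, g a := ZMod.sum_range_natCast g

theorem stmt_4_general (l m n : ℕ) (hlm : l ≤ m) (hmn : m ≤ n) :
    ∑ k ∈ Finset.Icc 1 (n - l + 1),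
        ((PFset m n).filter (fun π => ∀ i : Fin l, coord π i.val = k + i.val)).card =
      (n - m + 1) * (n + 1) ^ (m - l) := by
  have hln : l ≤ n := hlm.trans hmn
  calc _ = ∑ k ∈ Icc 1 (n - l + 1),
        #{τ ∈ (blockSet l ((k - 1 : ℕ) : ZMod (n + 1)) : Finset (Fin m → _)) | IsPFMod n τ} :=
        sum_congr rfl fun k hk => card_filter_forall_coord_eq hlm hln hk
    _ = ∑ a : ZMod (n + 1), #{τ ∈ (blockSet l a : Finset (Fin m → _)) | IsPFMod n τ} :=
        sum_Icc_natCast_sub_one (by omega)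
          (fun a => #{τ ∈ (blockSet l a : Finset (Fin m → _)) | IsPFMod n τ}) fun a ha => by
            rw [filter_blockSet_isPFMod_eq_empty hlm (by omega), card_empty]
    _ = (n + 1) ^ (m - l) * (n + 1 - m) := sum_card_filter_blockSet_isPFMod hmn
    _ = (n - m + 1) * (n + 1) ^ (m - l) := by rw [mul_comm, Nat.sub_add_comm hmn]

/-- Proposition 2.8. Summing the number of parking functions whose first
`l` coordinates are the contiguous block `k, …, k+l-1` over all such blocks. -/
theorem stmt_4 (l m n : ℕ) (hl : 1 ≤ l) (hlm : l ≤ m) (hmn : m ≤ n) :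
    ∑ k ∈ Finset.Icc 1 (n - l + 1),
        ((PFset m n).filter (fun π => ∀ i : Fin l, coord π i.val = k + i.val)).card =
      (n - m + 1) * (n + 1) ^ (m - l) :=
  stmt_4_general l m n hlm hmn
end

section
/- Let 1 ≤ l ≤ m ≤ n be integers and let v = (v_1,…,v_l) ∈ {1,…,n}^l be non-decreasing with all v_i elements of {n−m+1,…,n} (so that the set difference below has exactly m−l elements). Let u = (u_1,…,u_{m−l}) consist of the elements of {n−m+1,…,n} \ {v_1,…,v_l} arranged in increasing order. Then (v_1,…,v_l,π_{l+1},…,π_m) ∈ PF(m,n) if and only if (π_{l+1},…,π_m) ∈ PF(u), the set of u-parking functions of length m−l. -/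
open Finset

/-! The entries of `v` and of `u` together list `{n-m+1, …, n}` without repetition, so for
`i ≤ n` exactly `m + i - n` of them are `≤ i`. The parking condition
`m + i - n ≤ #{v ≤ i} + #{π ≤ i}` therefore says `#{u ≤ i} ≤ #{π ≤ i}` for every `i`, and for
increasing `u` this is the condition `λ_j ≤ u_j` on the sorted rearrangement `λ` of `π`, since
`λ_j ≤ t` holds exactly when at least `j + 1` entries of `π` are `≤ t`. -/

theorem List.SortedLE.getElem_le_iff_succ_le_countP {L : List ℕ} (hL : L.SortedLE) {j : ℕ}
    (hj : j < L.length) (t : ℕ) : L[j] ≤ t ↔ j + 1 ≤ L.countP (· ≤ t) := by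
  constructor
  · intro hjt
    have htake : (L.take (j + 1)).countP (· ≤ t) = j + 1 := by
      rw [List.countP_eq_length.mpr, List.length_take, min_eq_left hj]
      intro x hx
      obtain ⟨i, hi, rfl⟩ := List.getElem_of_mem hx
      simp only [List.getElem_take, List.length_take, decide_eq_true_eq] at hi ⊢
      exact (hL.getElem_le_getElem_of_le (by omega)).trans hjt
    rw [← L.take_append_drop (j + 1), List.countP_append, htake]
    omega
  · intro hcount
    by_contra! htj
    have hdrop : (L.drop j).countP (· ≤ t) = 0 := by
      rw [List.countP_eq_zero]
      intro x hx
      obtain ⟨i, hi, rfl⟩ := List.getElem_of_mem hx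
      simp only [List.getElem_drop, decide_eq_true_eq, not_le]
      exact htj.trans_le (hL.getElem_le_getElem_of_le (by omega))
    have htake := ((L.take j).countP_le_length (p := (· ≤ t))).trans (List.length_take_le j L)
    rw [← L.take_append_drop j, List.countP_append, hdrop] at hcount
    omega

theorem isUPF_iff_succ_le_countP {r : ℕ} (u : Fin r → ℕ) (π : List ℕ) :
    IsUPF r u π ↔
      π.length = r ∧ (∀ x ∈ π, 1 ≤ x) ∧ ∀ j : Fin r, j + 1 ≤ π.countP (· ≤ u j) := by
  have key : ∀ lam : List ℕ, π.Perm lam → lam.SortedLE → π.length = r →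
      ((∀ j : Fin r, lam.getD j 0 ≤ u j) ↔ ∀ j : Fin r, j + 1 ≤ π.countP (· ≤ u j)) := by
    intro lam hperm hsorted hlen
    refine forall_congr' fun j => ?_
    have hj : (j : ℕ) < lam.length := by rw [← hperm.length_eq, hlen]; exact j.2
    rw [List.getD_eq_getElem _ _ hj, hsorted.getElem_le_iff_succ_le_countP hj, hperm.countP_eq]
  constructor
  · rintro ⟨hlen, hpos, lam, hperm, hsorted, hle⟩
    exact ⟨hlen, hpos, (key lam hperm hsorted.sortedLE hlen).mp hle⟩
  · rintro ⟨hlen, hpos, hcount⟩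
    have hsorted := List.pairwise_mergeSort' (· ≤ ·) π
    have hperm := (List.mergeSort_perm π (· ≤ ·)).symm
    exact ⟨hlen, hpos, _, hperm, hsorted, (key _ hperm hsorted.sortedLE hlen).mpr hcount⟩

theorem forall_succ_le_countP_iff_forall_countP_le {r : ℕ} {u : Fin r → ℕ} (hu : Monotone u)
    (π : List ℕ) :
    (∀ j : Fin r, j + 1 ≤ π.countP (· ≤ u j)) ↔
      ∀ i, (List.ofFn u).countP (· ≤ i) ≤ π.countP (· ≤ i) := by
  have hle_iff (j : Fin r) (t : ℕ) : u j ≤ t ↔ j + 1 ≤ (List.ofFn u).countP (· ≤ t) := by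
    simpa using hu.sortedLE_ofFn.getElem_le_iff_succ_le_countP (j := j) (by simp) t
  constructor
  · intro h i
    set c := (List.ofFn u).countP (· ≤ i)
    obtain hc | hc := Nat.eq_zero_or_pos c
    · omega
    have hcr : c - 1 < r := by
      have := (List.ofFn u).countP_le_length (p := (· ≤ i))
      rw [List.length_ofFn] at this
      omega
    have hui : u ⟨c - 1, hcr⟩ ≤ i := (hle_iff _ i).mpr (by dsimp only; omega)
    calc c = (c - 1) + 1 := by omega
      _ ≤ π.countP (· ≤ u ⟨c - 1, hcr⟩) := h ⟨c - 1, hcr⟩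
      _ ≤ π.countP (· ≤ i) := List.countP_mono_left fun x _ hx => by
        simp only [decide_eq_true_eq] at hx ⊢
        omega
  · intro h j
    exact ((hle_iff j (u j)).mp le_rfl).trans (h (u j))

theorem forall_countP_le_iff_of_forall_le {n : ℕ} {U π : List ℕ} (hU : ∀ x ∈ U, x ≤ n)
    (hlen : U.length = π.length) :
    (∀ i, U.countP (· ≤ i) ≤ π.countP (· ≤ i)) ↔
      (∀ x ∈ π, x ≤ n) ∧ ∀ i ≤ n, U.countP (· ≤ i) ≤ π.countP (· ≤ i) := by
  constructor
  · intro h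
    refine ⟨?_, fun i _ => h i⟩
    have hUn : U.countP (· ≤ n) = U.length := List.countP_eq_length.mpr (by simpa using hU)
    have hπn : π.countP (· ≤ n) = π.length :=
      le_antisymm List.countP_le_length (hlen ▸ hUn ▸ h n)
    simpa using List.countP_eq_length.mp hπn
  · rintro ⟨hπ, h⟩ i
    rcases le_total i n with hi | hi
    · exact h i hi
    calc U.countP (· ≤ i) ≤ U.length := List.countP_le_length
      _ = π.length := hlen
      _ = π.countP (· ≤ i) :=
        (List.countP_eq_length.mpr fun x hx => by simpa using (hπ x hx).trans hi).symm

theorem countP_ofFn_add_countP_ofFn_eq_card_filter {l r : ℕ} {s : Finset ℕ}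
    (hs : s.card = l + r)
    {v : Fin l → ℕ} (hv : ∀ k, v k ∈ s) {u : Fin r → ℕ} (hu : Set.range u = ↑s \ Set.range v)
    (p : ℕ → Prop) [DecidablePred p] :
    (List.ofFn v).countP p + (List.ofFn u).countP p = (s.filter p).card := by
  set L := List.ofFn v ++ List.ofFn u
  have hLs : L.toFinset = s := by
    ext x
    simp only [L, List.mem_toFinset, List.mem_append, List.mem_ofFn, ← Set.mem_range]
    constructor
    · rintro (⟨k, rfl⟩ | hx)
      · exact hv k
      · exact (hu ▸ hx : x ∈ (↑s \ Set.range v : Set ℕ)).1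
    · intro hx
      by_cases hxv : x ∈ Set.range v
      · exact .inl hxv
      · exact .inr (hu ▸ (⟨hx, hxv⟩ : x ∈ (↑s \ Set.range v : Set ℕ)))
  -- `L` enumerates `s` and is as long as `#s`, so it has no repeated entries.
  have hnodup : L.Nodup := by
    rw [← Multiset.coe_nodup, ← Multiset.toFinset_card_eq_card_iff_nodup]
    simp [L, hLs, hs]
  rw [← List.countP_append, ← hnodup.card_eq_countP, hLs]

theorem stmt_5_general (l m n : ℕ) (hlm : l ≤ m) (hmn : m ≤ n)
    (v : Fin l → ℕ) (hvrange : ∀ i, n - m + 1 ≤ v i ∧ v i ≤ n)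
    (u : Fin (m - l) → ℕ) (humono : StrictMono u)
    (hurange : Set.range u = Set.Icc (n - m + 1) n \ Set.range v)
    (π : List ℕ) (hπ : π.length = m - l) :
    IsPF n (List.ofFn v ++ π) ↔ IsUPF (m - l) u π := by
  have hu_le : ∀ x ∈ List.ofFn u, x ≤ n := by
    simp only [List.mem_ofFn]
    rintro _ ⟨j, rfl⟩
    exact (hurange.subset ⟨j, rfl⟩).1.2
  have hsplit (i : ℕ) (hi : i ≤ n) :
      (List.ofFn v).countP (· ≤ i) + (List.ofFn u).countP (· ≤ i) = m + i - n := by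
    rw [countP_ofFn_add_countP_ofFn_eq_card_filter (s := Finset.Icc (n - m + 1) n)
      (by rw [Nat.card_Icc]; omega) (fun k => Finset.mem_Icc.mpr (hvrange k))
      (by simpa using hurange)]
    have hfilter : (Finset.Icc (n - m + 1) n).filter (· ≤ i) = Finset.Icc (n - m + 1) i := by
      ext x
      simp only [Finset.mem_filter, Finset.mem_Icc]
      omega
    rw [hfilter, Nat.card_Icc]
    omega
  rw [isUPF_iff_succ_le_countP, forall_succ_le_countP_iff_forall_countP_le humono.monotone,
    forall_countP_le_iff_of_forall_le hu_le (by rw [List.length_ofFn, hπ])]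
  have hv_mem : ∀ x ∈ List.ofFn v, 1 ≤ x ∧ x ≤ n := by
    simp only [List.mem_ofFn]
    rintro _ ⟨k, rfl⟩
    exact ⟨by linarith [hvrange k], (hvrange k).2⟩
  simp only [IsPF, InRange, List.mem_append, List.length_append, List.length_ofFn, hπ,
    Nat.add_sub_cancel' hlm, List.countP_append, true_and]
  constructor
  · rintro ⟨hrange, hcount⟩
    refine ⟨fun x hx => (hrange x (.inr hx)).1, fun x hx => (hrange x (.inr hx)).2,
      fun i hi => ?_⟩
    have := hcount i hi
    have := hsplit i hi
    omega
  · rintro ⟨hpos, hle, hcount⟩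
    refine ⟨fun x hx => hx.elim (hv_mem x) fun hx => ⟨hpos x hx, hle x hx⟩, fun i hi => ?_⟩
    have := hcount i hi
    have := hsplit i hi
    omega

/-- Proposition 2.10. Completing specified preferences `v_1, …, v_l` to a
parking function in `PF(m,n)` is equivalent to being a `u`-parking function, where `u`
consists of the elements of `{n-m+1, …, n} \ {v_1, …, v_l}` in increasing order. -/
theorem stmt_5 (l m n : ℕ) (hl : 1 ≤ l) (hlm : l ≤ m) (hmn : m ≤ n)
    (v : Fin l → ℕ) (hvmono : Monotone v) (hvrange : ∀ i, n - m + 1 ≤ v i ∧ v i ≤ n)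
    (u : Fin (m - l) → ℕ) (humono : StrictMono u)
    (hurange : Set.range u = Set.Icc (n - m + 1) n \ Set.range v)
    (π : List ℕ) (hπ : π.length = m - l) :
    IsPF n (List.ofFn v ++ π) ↔ IsUPF (m - l) u π :=
  stmt_5_general l m n hlm hmn v hvrange u humono hurange π hπ
end

section
/- Let u = (u_1,…,u_m) be a positive-integer-valued vector with u_1 < u_2 < … < u_m (strictly increasing). Let v = (v_1,…,v_l) consist of the elements of the interval {u_1, u_1+1, …, u_m} \ {u_1,…,u_m}, arranged in increasing order (so l = u_m − u_1 + 1 − m). Then (v_1,…,v_l,π_1,…,π_m) ∈ PF(u_m−u_1+1, u_m) if and only if (π_1,…,π_m) ∈ PF(u), the set of u-parking functions of length m. -/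
open Finset

/-! The entries of `v` and of `u` together list every integer of `[u₁, u_m]` exactly once, so
for `i ≤ u_m` exactly `i + 1 - u₁` of them are `≤ i`. The parking condition for `(v, π)` at `i`
therefore reduces to `#{j | u_j ≤ i} ≤ #{k | π_k ≤ i}`, and for non-decreasing `u` these
inequalities are the counting form of `λ_j ≤ u_j` for the sorted rearrangement `λ` of `π`. -/

theorem List.Forall₂.countP_le_countP {α β : Type*} {R : α → β → Prop} {p : α → Bool}
    {q : β → Bool} (hpq : ∀ a b, R a b → q b → p a) {l₁ : List α} {l₂ : List β}
    (h : List.Forall₂ R l₁ l₂) : l₂.countP q ≤ l₁.countP p := by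
  induction h with
  | nil => simp
  | @cons a b _ _ hab _ ih =>
    rw [List.countP_cons, List.countP_cons]
    by_cases hb : q b
    · simp [hb, hpq a b hab hb, ih]
    · simp only [hb, Bool.false_eq_true, if_false]; split <;> omega

theorem List.Pairwise.getElem_le_iff_lt_countP {α : Type*} [Preorder α] [DecidableLE α]
    {l : List α} (hl : l.Pairwise (· ≤ ·)) {j : ℕ} (hj : j < l.length) (t : α) :
    l[j] ≤ t ↔ j < l.countP (· ≤ t) := by
  have hmono : ∀ i k (hi : i < l.length) (hk : k < l.length), i ≤ k → l[i] ≤ l[k] := by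
    intro i k hi hk hik
    rcases hik.eq_or_lt with rfl | hlt
    · exact le_rfl
    · exact List.pairwise_iff_getElem.mp hl i k hi hk hlt
  constructor
  · intro hjt
    have htake : (l.take (j + 1)).countP (· ≤ t) = j + 1 := by
      rw [List.countP_eq_length.mpr, List.length_take]; · omega
      intro a ha
      obtain ⟨k, hk, rfl⟩ := List.mem_iff_getElem.mp ha
      rw [List.length_take] at hk
      simpa using (hmono k j _ hj (by omega)).trans hjt
    have := (List.take_sublist (j + 1) l).countP_le (p := (· ≤ t))
    omega
  · intro hcount
    by_contra hjt
    have hdrop : (l.drop j).countP (· ≤ t) = 0 := by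
      rw [List.countP_eq_zero]
      intro a ha hat
      obtain ⟨k, hk, rfl⟩ := List.mem_iff_getElem.mp ha
      rw [List.getElem_drop] at hat
      rw [List.length_drop] at hk
      exact hjt ((hmono j (j + k) hj (by omega) (by omega)).trans (by simpa using hat))
    have htake := (l.take j).countP_le_length (p := (· ≤ t))
    rw [← List.take_append_drop j l, List.countP_append, hdrop] at hcount
    rw [List.length_take] at htake
    omega

theorem isUPF_iff_countP_le {r n : ℕ} {u : Fin r → ℕ} (hu : Monotone u)
    (hun : ∀ j, u j ≤ n) {π : List ℕ} (hπ : π.length = r) :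
    IsUPF r u π ↔ (∀ x ∈ π, 1 ≤ x) ∧
      ∀ i ≤ n, (List.ofFn u).countP (· ≤ i) ≤ π.countP (· ≤ i) := by
  unfold IsUPF
  simp only [hπ, true_and]
  refine and_congr_right fun _ => ⟨?_, fun hcount => ?_⟩
  · rintro ⟨lam, hperm, -, hlam⟩ i -
    have hlen : lam.length = r := by rw [← hperm.length_eq, hπ]
    have hle : List.Forall₂ (· ≤ ·) lam (List.ofFn u) :=
      List.forall₂_iff_get.mpr ⟨by simp [hlen], fun j hj _ => by
        simpa only [List.get_eq_getElem, List.getElem_ofFn, List.getD_eq_getElem _ _ hj]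
          using hlam ⟨j, hlen ▸ hj⟩⟩
    rw [hperm.countP_eq]
    exact hle.countP_le_countP fun a b hab hb => by simpa using hab.trans (by simpa using hb)
  · set lam := Multiset.sort (π : Multiset ℕ)
    have hperm : π.Perm lam := (Multiset.coe_eq_coe.mp (Multiset.sort_eq _ _)).symm
    have hsorted : lam.Pairwise (· ≤ ·) := Multiset.pairwise_sort _ _
    refine ⟨lam, hperm, hsorted, fun j => ?_⟩
    have hj : (j : ℕ) < lam.length := by simp [← hperm.length_eq, hπ]
    have hu_sorted : (List.ofFn u).Pairwise (· ≤ ·) :=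
      List.pairwise_ofFn.mpr fun _ _ h => hu h.le
    have hju : (j : ℕ) < (List.ofFn u).countP (· ≤ u j) :=
      (hu_sorted.getElem_le_iff_lt_countP (by simp) (u j)).mp (by simp)
    rw [List.getD_eq_getElem _ _ hj, hsorted.getElem_le_iff_lt_countP hj, ← hperm.countP_eq]
    exact hju.trans_le (hcount (u j) (hun j))

theorem List.Nodup.countP_le_of_toFinset_eq_Icc {l : List ℕ} (hl : l.Nodup) {a b : ℕ}
    (h : l.toFinset = Finset.Icc a b) {i : ℕ} (hi : i ≤ b) :
    l.countP (· ≤ i) = i + 1 - a := by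
  rw [List.countP_eq_length_filter, ← List.toFinset_card_of_nodup (hl.filter _),
    List.toFinset_filter, h]
  have : (Finset.Icc a b).filter (fun x => decide (x ≤ i) = true) = Finset.Icc a i := by
    ext x; simp only [Finset.mem_filter, Finset.mem_Icc, decide_eq_true_eq]; omega
  rw [this, Nat.card_Icc]

theorem isPF_append_iff_countP_le {a n : ℕ} (ha : 1 ≤ a) {w ρ π : List ℕ}
    (hnodup : (w ++ ρ).Nodup) (hset : (w ++ ρ).toFinset = Finset.Icc a n)
    (hπ : π.length = ρ.length) :
    IsPF n (w ++ π) ↔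
      (∀ x ∈ π, 1 ≤ x) ∧ ∀ i ≤ n, ρ.countP (· ≤ i) ≤ π.countP (· ≤ i) := by
  have hcount : ∀ i ≤ n, w.countP (· ≤ i) + ρ.countP (· ≤ i) = i + 1 - a := by
    intro i hi
    rw [← List.countP_append, hnodup.countP_le_of_toFinset_eq_Icc hset hi]
  have hlen : w.length + ρ.length = n + 1 - a := by
    rw [← List.length_append, ← List.toFinset_card_of_nodup hnodup, hset, Nat.card_Icc]
  have hmem : ∀ x ∈ w ++ ρ, a ≤ x ∧ x ≤ n := fun x hx => by
    simpa [hset] using List.mem_toFinset.mpr hx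
  simp only [IsPF, InRange, List.length_append, List.countP_append, List.mem_append, hπ]
  constructor
  · rintro ⟨hrange, hpf⟩
    refine ⟨fun x hx => (hrange x (Or.inr hx)).1, fun i hi => ?_⟩
    have hpf_i := hpf i hi
    have hcount_i := hcount i hi
    omega
  · rintro ⟨hpos, hle⟩
    refine ⟨?_, fun i hi => ?_⟩
    · rintro x (hx | hx)
      · have := hmem x (List.mem_append_left ρ hx)
        exact ⟨ha.trans this.1, this.2⟩
      · have hρ : ρ.countP (· ≤ n) = ρ.length := List.countP_eq_length.mpr fun y hy => by
          simpa using (hmem y (List.mem_append_right w hy)).2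
        have hall : π.countP (· ≤ n) = π.length :=
          le_antisymm List.countP_le_length (hπ ▸ hρ ▸ hle n le_rfl)
        exact ⟨hpos x hx, by simpa using List.countP_eq_length.mp hall x hx⟩
    · have hle_i := hle i hi
      have hcount_i := hcount i hi
      omega

/-- Proposition 2.11. For a strictly increasing positive vector `u`,
prepending the missing values `v` of the interval `[u_1, u_m]` produces a parking function
in `PF(u_m - u_1 + 1, u_m)` exactly when `π` is a `u`-parking function. -/
theorem stmt_6 (m : ℕ) (hm : 1 ≤ m) (u : Fin m → ℕ) (hupos : ∀ i, 1 ≤ u i)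
    (humono : StrictMono u)
    (L : ℕ)
    (v : Fin L → ℕ) (hvmono : StrictMono v)
    (hvrange : Set.range v =
      Set.Icc (u ⟨0, by omega⟩) (u ⟨m - 1, by omega⟩) \ Set.range u)
    (π : List ℕ) (hπ : π.length = m) :
    IsPF (u ⟨m - 1, by omega⟩) (List.ofFn v ++ π) ↔ IsUPF m u π := by
  set n := u ⟨m - 1, by omega⟩
  set a := u ⟨0, by omega⟩
  have hu_mem : ∀ j, u j ∈ Set.Icc a n := fun j =>
    ⟨humono.monotone (Fin.le_def.mpr (Nat.zero_le _)),
      humono.monotone (Fin.le_def.mpr (by simp only; omega))⟩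
  have hnodup : (List.ofFn v ++ List.ofFn u).Nodup := by
    refine List.nodup_append.mpr
      ⟨List.nodup_ofFn.mpr hvmono.injective, List.nodup_ofFn.mpr humono.injective, ?_⟩
    rintro x hx _ hy rfl
    have hx' : x ∈ Set.Icc a n \ Set.range u := hvrange ▸ List.mem_ofFn.mp hx
    exact hx'.2 (List.mem_ofFn.mp hy)
  have hset : (List.ofFn v ++ List.ofFn u).toFinset = Finset.Icc a n := by
    ext x
    have : x ∈ Set.range v ∪ Set.range u ↔ x ∈ Set.Icc a n := by
      rw [hvrange, Set.sdiff_union_of_subset (Set.range_subset_iff.mpr hu_mem)]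
    simpa [List.mem_ofFn] using this
  rw [isUPF_iff_countP_le humono.monotone (fun j => (hu_mem j).2) hπ]
  exact isPF_append_iff_countP_le (hupos _) hnodup hset (by simp [hπ])
end

section
/- Let 0 ≤ m < n, 1 ≤ i ≤ n−m, and i ≤ k ≤ m+i be integers, and let PF(m,n;i,k) = {π ∈ PF(m,n) : k_i(π) = k}. Let π_2,…,π_m ∈ {1,…,n} and j ∈ {1,…,n}. Then (j,π_2,…,π_m) ∈ PF(m,n;i,k) and (j+1,π_2,…,π_m) ∉ PF(m,n;i,k) if and only if one of the following holds: (1) i ≤ j ≤ k−1 and (π_2,…,π_m) is a parking function multi-shuffle of α ∈ PF(j−i, j−1), β ∈ PF(k−j−1, k−j−1), and γ ∈ PF(m−k+i, n−k) (with offsets j and k); or (2) j ≥ n−m−i+k+1 and (π_2,…,π_m) is a parking function multi-shuffle of α ∈ PF(k−i, k−1), β ∈ PF(j−k−1−n+m+i, j−k−1), and γ ∈ PF(n−j, n−j) (with offsets k and j). -/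
open Finset

/-!
Spot `s` stays empty under the parking process iff for every `t ≤ s` fewer than `s - t + 1` cars
prefer a spot of `[t, s]`, and all cars park iff at most `n - t + 1` cars prefer a spot of `[t, n]`
for every `t`. In this counting form everything is invariant under permuting the cars, and it
splits at an empty spot `a`: the cars preferring spots below `a` form a parking function on `a - 1`
spots, and the cars preferring spots above `a`, shifted down by `a`, behave exactly like a
preference list on the remaining `n - a` spots.

The first car, preferring `j`, takes the first spot `u ≥ j` left empty by `π_2, …, π_m`. Hence `j`
is the largest first preference with `k_i = k` iff `j` is itself empty for the other cars and either
`j < k` with no empty spot strictly between them, or `k < j` with no empty spot above `j`. Splitting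
at the two empty spots `j` and `k` produces the three blocks `α`, `β`, `γ`; the gap condition says
that the middle block (case 1) or the top block (case 2) fills all its spots, and the rank of `k`
fixes the length of `α`.
-/

namespace ParkingFunction

def countIcc (l : List ℕ) (t s : ℕ) : ℕ := l.countP fun x => t ≤ x ∧ x ≤ s

section Count

variable {l l' : List ℕ} {a t t' r s s' : ℕ}

@[simp] lemma countIcc_nil : countIcc [] t s = 0 := rfl

lemma countIcc_cons :
    countIcc (a :: l) t s = countIcc l t s + if t ≤ a ∧ a ≤ s then 1 else 0 := by
  simp [countIcc, List.countP_cons]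

lemma countIcc_append : countIcc (l ++ l') t s = countIcc l t s + countIcc l' t s :=
  List.countP_append ..

lemma _root_.List.Perm.countIcc_eq (h : l.Perm l') : countIcc l t s = countIcc l' t s :=
  h.countP_eq _

lemma countIcc_le_length : countIcc l t s ≤ l.length := List.countP_le_length

lemma countIcc_add_countIcc (h₁ : t ≤ r + 1) (h₂ : r ≤ s) :
    countIcc l t r + countIcc l (r + 1) s = countIcc l t s := by
  induction l with
  | nil => rfl
  | cons a l ih => simp only [countIcc_cons, ← ih]; split_ifs <;> omega

lemma countIcc_congr (h : ∀ x ∈ l, (t ≤ x ∧ x ≤ s ↔ t' ≤ x ∧ x ≤ s')) :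
    countIcc l t s = countIcc l t' s' :=
  List.countP_congr fun x hx => by simpa using h x hx

lemma countIcc_eq_zero (h : ∀ x ∈ l, x < t ∨ s < x) : countIcc l t s = 0 :=
  List.countP_eq_zero.2 fun x hx => by have := h x hx; simp only [decide_eq_true_eq]; omega

lemma countIcc_map_add (hl : ∀ x ∈ l, 1 ≤ x) :
    countIcc (l.map (· + a)) t s = countIcc l (t - a) (s - a) := by
  simp only [countIcc, List.countP_map]
  exact List.countP_congr fun x hx => by
    have := hl x hx
    simp only [Function.comp_apply, decide_eq_true_eq]
    omega

lemma countIcc_one_eq_length {n : ℕ} (hl : InRange n l) : countIcc l 1 n = l.length :=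
  List.countP_eq_length.2 fun x hx => by simpa using hl x hx

end Count

/-- At most `s - t + c` cars prefer a spot of `[t, s]`, for every `t`. With `c = 0` this says
that spot `s` stays empty, with `c = 1` and `s = n` that every car finds a spot. -/
def Uncrowded (c : ℕ) (l : List ℕ) (s : ℕ) : Prop :=
  ∀ t, 1 ≤ t → t ≤ s → countIcc l t s + t ≤ s + c

section Uncrowded

variable {c n a u s : ℕ} {l l' : List ℕ}

lemma not_uncrowded_iff :
    ¬ Uncrowded c l s ↔ ∃ t, 1 ≤ t ∧ t ≤ s ∧ s + c < countIcc l t s + t := by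
  simp [Uncrowded]

lemma _root_.List.Perm.uncrowded_iff (h : l.Perm l') : Uncrowded c l s ↔ Uncrowded c l' s := by
  simp only [Uncrowded, h.countIcc_eq]

lemma Uncrowded.of_cons (h : Uncrowded c (a :: l) s) : Uncrowded c l s := fun t h₁ h₂ => by
  have := h t h₁ h₂
  rw [countIcc_cons] at this
  omega

lemma isPF_iff : IsPF n l ↔ InRange n l ∧ Uncrowded 1 l n := by
  refine and_congr_right fun hl => ?_
  have hsplit (i : ℕ) (hi : i ≤ n) :
      l.countP (fun x => decide (x ≤ i)) + countIcc l (i + 1) n = l.length := by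
    rw [← countIcc_one_eq_length hl, ← countIcc_add_countIcc (t := 1) (by omega) hi]
    congr 1
    exact List.countP_congr fun x hx => by have := hl x hx; simp only [decide_eq_true_eq]; omega
  constructor
  · intro h t ht htn
    have h₁ := h (t - 1) (by omega)
    have h₂ := hsplit (t - 1) (by omega)
    have : countIcc l t n ≤ l.length := countIcc_le_length
    rw [Nat.sub_add_cancel ht] at h₂
    omega
  · intro h i hi
    have := hsplit i hi
    rcases hi.lt_or_eq with hi | rfl
    · have := h (i + 1) (by omega) hi
      omega
    · have : countIcc l (i + 1) i = 0 := countIcc_eq_zero fun x _ => by omega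
      omega

/-- The crowded intervals ending at consecutive occupied spots chain together. -/
lemma exists_crowded_of_forall_occupied {b s : ℕ} (hbs : b ≤ s)
    (h : ∀ x, b ≤ x → x ≤ s → ¬ Uncrowded 0 l x) :
    ∃ t, 1 ≤ t ∧ t ≤ b ∧ s < countIcc l t s + t := by
  induction s using Nat.strong_induction_on with
  | _ s ih =>
  obtain ⟨t₁, ht₁, ht₁s, hcrowd⟩ := not_uncrowded_iff.1 (h s hbs le_rfl)
  by_cases htb : t₁ ≤ b
  · exact ⟨t₁, ht₁, htb, by simpa using hcrowd⟩
  obtain ⟨t, ht, htb', hcrowd'⟩ :=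
    ih (t₁ - 1) (by omega) (by omega) fun x hx hx' => h x hx (by omega)
  have := countIcc_add_countIcc (l := l) (t := t) (r := t₁ - 1) (s := s) (by omega) (by omega)
  rw [Nat.sub_add_cancel ht₁] at this
  exact ⟨t, ht, htb', by omega⟩

lemma uncrowded_zero_cons_iff (ha : 1 ≤ a) (hau : a ≤ u) (hu : Uncrowded 0 l u)
    (hfull : ∀ x, a ≤ x → x < u → ¬ Uncrowded 0 l x) :
    Uncrowded 0 (a :: l) s ↔ Uncrowded 0 l s ∧ s ≠ u := by
  constructor
  · refine fun h => ⟨h.of_cons, ?_⟩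
    rintro rfl
    obtain ⟨t, ht, hta, hcrowd⟩ :
        ∃ t, 1 ≤ t ∧ t ≤ a ∧ s ≤ countIcc l t (s - 1) + t := by
      rcases hau.eq_or_lt with rfl | hlt
      · exact ⟨a, ha, le_rfl, by omega⟩
      · obtain ⟨t, h₁, h₂, h₃⟩ :=
          exists_crowded_of_forall_occupied (Nat.le_sub_one_of_lt hlt) fun x hx hx' =>
            hfull x hx (by omega)
        exact ⟨t, h₁, h₂, by omega⟩
    have hbound := h t ht (by omega)
    have := countIcc_add_countIcc (l := l) (t := t) (r := s - 1) (s := s) (by omega) (by omega)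
    rw [countIcc_cons, if_pos ⟨by omega, hau⟩] at hbound
    omega
  · rintro ⟨h, hsu⟩ t ht hts
    rw [countIcc_cons]
    split_ifs with hta
    · rcases Nat.lt_or_gt_of_ne hsu with hlt | hgt
      · exact absurd h (hfull s hta.2 hlt)
      · have := hu t ht (by omega)
        have := h (u + 1) (by omega) hgt
        have := countIcc_add_countIcc (l := l) (t := t) (r := u) (s := s) (by omega) hgt.le
        omega
    · simpa using h t ht hts

end Uncrowded

open scoped Classical in
noncomputable def vacantSet (n : ℕ) (l : List ℕ) : Finset ℕ :=
  {s ∈ Icc 1 n | Uncrowded 0 l s}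

section Vacant

variable {n j u s : ℕ} {l l' : List ℕ}

lemma mem_vacantSet : s ∈ vacantSet n l ↔ 1 ≤ s ∧ s ≤ n ∧ Uncrowded 0 l s := by
  simp [vacantSet, and_assoc]

lemma vacantSet_subset_Icc : vacantSet n l ⊆ Icc 1 n := fun _ hs =>
  mem_Icc.2 ⟨(mem_vacantSet.1 hs).1, (mem_vacantSet.1 hs).2.1⟩

lemma _root_.List.Perm.vacantSet_eq (h : l.Perm l') : vacantSet n l = vacantSet n l' := by
  ext s
  simp only [mem_vacantSet, h.uncrowded_iff]

lemma uncrowded_one_cons_iff (hj : 1 ≤ j) (hjn : j ≤ n) :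
    Uncrowded 1 (j :: l) n ↔ Uncrowded 1 l n ∧ ∃ v ∈ vacantSet n l, j ≤ v := by
  constructor
  · refine fun h => ⟨h.of_cons, ?_⟩
    by_contra! hfull
    obtain ⟨t, ht, htj, hcrowd⟩ := exists_crowded_of_forall_occupied hjn fun x hjx hxn hx =>
      (hfull x (mem_vacantSet.2 ⟨by omega, hxn, hx⟩)).not_ge hjx
    have := h t ht (by omega)
    rw [countIcc_cons, if_pos ⟨htj, hjn⟩] at this
    omega
  · rintro ⟨h, v, hv, hjv⟩ t ht htn
    obtain ⟨-, hvn, hvempty⟩ := mem_vacantSet.1 hv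
    rw [countIcc_cons]
    split_ifs with htj
    · have := hvempty t ht (by omega)
      have := countIcc_add_countIcc (l := l) (t := t) (r := v) (s := n) (by omega) hvn
      have : countIcc l (v + 1) n + v ≤ n := by
        rcases hvn.lt_or_eq with hvn | rfl
        · have := h (v + 1) (by omega) hvn
          omega
        · simp [countIcc_eq_zero (l := l) (t := v + 1) (s := v) fun x _ => by omega]
      omega
    · simpa using h t ht htn

lemma vacantSet_cons (hj : 1 ≤ j) (hu : u ∈ vacantSet n l) (hju : j ≤ u)
    (hmin : ∀ v ∈ vacantSet n l, j ≤ v → u ≤ v) :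
    vacantSet n (j :: l) = (vacantSet n l).erase u := by
  obtain ⟨-, hun, huempty⟩ := mem_vacantSet.1 hu
  have hfull : ∀ x, j ≤ x → x < u → ¬ Uncrowded 0 l x := fun x hjx hxu hx =>
    (hmin x (mem_vacantSet.2 ⟨by omega, by omega, hx⟩) hjx).not_gt hxu
  ext s
  simp only [mem_vacantSet, mem_erase, uncrowded_zero_cons_iff hj hju huempty hfull]
  tauto

lemma parkAux_append_singleton (l : List (ℕ × ℕ)) (c : ℕ × ℕ) (occ : Finset ℕ) :
    parkAux (l ++ [c]) occ = (parkAux l occ).bind fun o =>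
      if h : (Icc c.1 c.2 \ (occ ∪ o.toFinset)).Nonempty then
        some (o ++ [(Icc c.1 c.2 \ (occ ∪ o.toFinset)).min' h]) else none := by
  induction l generalizing occ with
  | nil => simp [parkAux]
  | cons d l ih =>
    simp only [List.cons_append, parkAux]
    split_ifs with h
    · rw [ih]
      cases parkAux l (insert ((Icc d.1 d.2 \ occ).min' h) occ) with
      | none => simp
      | some o =>
        simp only [Option.map_some, Option.bind_some, List.toFinset_cons, insert_union,
          union_insert]
        split_ifs <;> simp
    · simp

lemma Icc_sdiff_sdiff_vacantSet {a : ℕ} (ha : 1 ≤ a) :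
    Icc a n \ (Icc 1 n \ vacantSet n l) = {v ∈ vacantSet n l | a ≤ v} := by
  ext v
  have := @vacantSet_subset_Icc n l v
  simp only [mem_sdiff, mem_Icc, mem_filter] at this ⊢
  constructor
  · rintro ⟨hv, hv'⟩
    exact ⟨by_contra fun h => hv' ⟨⟨by omega, hv.2⟩, h⟩, hv.1⟩
  · rintro ⟨hv, hav⟩
    exact ⟨⟨hav, (this hv).2⟩, fun h => h.2 hv⟩

lemma outcome_eq_some (hl : InRange n l) (hpark : Uncrowded 1 l n) :
    ∃ o, outcome n l = some o ∧ o.Nodup ∧ o.length = l.length ∧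
      o.toFinset = Icc 1 n \ vacantSet n l := by
  induction l using List.reverseRecOn with
  | nil =>
    refine ⟨[], rfl, List.nodup_nil, rfl, ?_⟩
    rw [List.toFinset_nil, eq_comm, sdiff_eq_empty_iff_subset]
    intro s hs
    exact mem_vacantSet.2 ⟨(mem_Icc.1 hs).1, (mem_Icc.1 hs).2, fun t _ _ => by
      rw [countIcc_nil]; omega⟩
  | append_singleton l a ih =>
    have hperm := List.perm_append_singleton a l
    have ha : 1 ≤ a ∧ a ≤ n := hl a (by simp)
    rw [hperm.uncrowded_iff, uncrowded_one_cons_iff ha.1 ha.2] at hpark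
    obtain ⟨o, ho, hnd, hlen, hset⟩ := ih (fun x hx => hl x (by simp [hx])) hpark.1
    have hfree : Icc a n \ o.toFinset = {v ∈ vacantSet n l | a ≤ v} :=
      hset ▸ Icc_sdiff_sdiff_vacantSet ha.1
    have hne : (Icc a n \ o.toFinset).Nonempty :=
      let ⟨v, hv, hav⟩ := hpark.2
      ⟨v, hfree ▸ mem_filter.2 ⟨hv, hav⟩⟩
    set u := (Icc a n \ o.toFinset).min' hne
    have hu : u ∈ vacantSet n l ∧ a ≤ u := mem_filter.1 (hfree ▸ min'_mem _ hne)
    have hmin : ∀ v ∈ vacantSet n l, a ≤ v → u ≤ v := fun v hv hav =>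
      min'_le _ _ (hfree ▸ mem_filter.2 ⟨hv, hav⟩)
    refine ⟨o ++ [u], ?_, hnd.append (List.nodup_singleton u) fun x hx hxu => ?_,
      by simp [hlen], ?_⟩
    · simp only [outcome] at ho ⊢
      simp only [List.map_append, List.map_singleton, parkAux_append_singleton, ho,
        Option.bind_some, empty_union, dif_pos hne, u]
    · rw [List.mem_singleton.1 hxu] at hx
      exact (mem_sdiff.1 (hset ▸ List.mem_toFinset.2 hx)).2 hu.1
    · rw [hperm.vacantSet_eq, vacantSet_cons ha.1 hu.1 hu.2 hmin,
        sdiff_erase (vacantSet_subset_Icc hu.1), ← hset]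
      ext
      simp [or_comm]

lemma card_vacantSet_add_length (hl : IsPF n l) : #(vacantSet n l) + l.length = n := by
  obtain ⟨o, -, hnd, hlen, hset⟩ := outcome_eq_some (isPF_iff.1 hl).1 (isPF_iff.1 hl).2
  have hcard := congrArg card hset
  rw [List.toFinset_card_of_nodup hnd, card_sdiff_of_subset vacantSet_subset_Icc,
    Nat.card_Icc] at hcard
  have := card_le_card (vacantSet_subset_Icc (n := n) (l := l))
  simp only [Nat.card_Icc] at this
  omega

lemma sort_getD_eq_iff (V : Finset ℕ) {p k : ℕ} (hk : k ≠ 0) :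
    (V.sort (· ≤ ·)).getD p 0 = k ↔ k ∈ V ∧ #{v ∈ V | v < k} = p := by
  have hcount : Nat.count (· ∈ V) k = #{v ∈ V | v < k} := by
    rw [Nat.count_eq_card_filter_range]
    congr 1
    ext v
    simp [and_comm]
  have hnth : Nat.nth (· ∈ V) p = (V.sort (· ≤ ·)).getD p 0 := by
    rw [Nat.nth_eq_getD_sort (p := (· ∈ V)) V.finite_toSet]
    congr
    ext
    simp
  rw [← hnth, ← hcount]
  constructor
  · rintro rfl
    exact ⟨Nat.nth_mem_of_ne_zero hk,
      Nat.count_nth fun hf => Nat.lt_card_toFinset_of_nth_ne_zero hk hf⟩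
  · rintro ⟨hkV, rfl⟩
    exact Nat.nth_count hkV

lemma kspot_eq_iff {i k : ℕ} (hl : InRange n l) (hpark : Uncrowded 1 l n) (hk : k ≠ 0) :
    kspot n l i = k ↔ k ∈ vacantSet n l ∧ #{v ∈ vacantSet n l | v < k} = i - 1 := by
  obtain ⟨o, ho, -, -, hset⟩ := outcome_eq_some hl hpark
  rw [kspot, ho, Option.getD_some, hset, Finset.sdiff_sdiff_eq_self vacantSet_subset_Icc]
  exact sort_getD_eq_iff _ hk

end Vacant

/-- After a car preferring `j` fills the first empty spot `u ≥ j` of `V`, the `i`-th empty spot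
is `k`. -/
def IthVacancyAfter (V : Finset ℕ) (j i k : ℕ) : Prop :=
  ∃ u, IsLeast {v | v ∈ V ∧ j ≤ v} u ∧ k ∈ V.erase u ∧
    #{v ∈ V.erase u | v < k} = i - 1

lemma isPF_cons_and_kspot_iff {n i j k : ℕ} {R : List ℕ} (hR : InRange n R) (hj : 1 ≤ j)
    (hk : k ≠ 0) :
    (IsPF n (j :: R) ∧ kspot n (j :: R) i = k) ↔
      Uncrowded 1 R n ∧ IthVacancyAfter (vacantSet n R) j i k := by
  constructor
  · rintro ⟨hpf, hks⟩
    obtain ⟨hjR, hpark⟩ := isPF_iff.1 hpf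
    have hjn := (hjR j List.mem_cons_self).2
    obtain ⟨hparkR, v, hv, hjv⟩ := (uncrowded_one_cons_iff hj hjn).1 hpark
    have hleast := isLeast_csInf (s := {v | v ∈ vacantSet n R ∧ j ≤ v}) ⟨v, hv, hjv⟩
    refine ⟨hparkR, _, hleast, ?_⟩
    rw [← vacantSet_cons hj hleast.1.1 hleast.1.2 fun v hv hjv => hleast.2 ⟨hv, hjv⟩]
    exact (kspot_eq_iff hjR hpark hk).1 hks
  · rintro ⟨hparkR, u, ⟨⟨hu, hju⟩, hmin⟩, hks⟩
    have hjn : j ≤ n := hju.trans (mem_vacantSet.1 hu).2.1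
    have hjR : InRange n (j :: R) := List.forall_mem_cons.2 ⟨⟨hj, hjn⟩, hR⟩
    have hpark := (uncrowded_one_cons_iff hj hjn).2 ⟨hparkR, u, hu, hju⟩
    refine ⟨isPF_iff.2 ⟨hjR, hpark⟩, (kspot_eq_iff hjR hpark hk).2 ?_⟩
    rwa [vacantSet_cons hj hu hju fun v hv hjv => hmin ⟨hv, hjv⟩]

section IthVacancyAfter

variable {V : Finset ℕ} {i j k u : ℕ}

lemma card_filter_erase_lt_add (hu : u ∈ V) :
    #{v ∈ V.erase u | v < k} + (if u < k then 1 else 0) = #{v ∈ V | v < k} := by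
  rw [filter_erase]
  split_ifs with huk
  · exact card_erase_add_one (mem_filter.2 ⟨hu, huk⟩)
  · rw [erase_eq_of_notMem (s := {v ∈ V | v < k}) fun h => huk (mem_filter.1 h).2, add_zero]

lemma filter_erase_lt_eq_of_gap (hjk : j < k) (hgap : ∀ v ∈ V, j < v → k ≤ v) :
    {v ∈ V.erase j | v < k} = {v ∈ V | v < j} := by
  ext v
  simp only [mem_filter, mem_erase]
  constructor
  · rintro ⟨⟨hvj, hv⟩, hvk⟩
    refine ⟨hv, by_contra fun h => ?_⟩
    exact absurd (hgap v hv (by omega)) (by omega)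
  · rintro ⟨hv, hvj⟩
    exact ⟨⟨hvj.ne, hv⟩, hvj.trans hjk⟩

lemma ithVacancyAfter_succ_iff_of_notMem (hj : j ∉ V) :
    IthVacancyAfter V (j + 1) i k ↔ IthVacancyAfter V j i k := by
  have : {v | v ∈ V ∧ j + 1 ≤ v} = {v | v ∈ V ∧ j ≤ v} := by
    ext v
    simp only [Set.mem_ofPred_eq]
    exact and_congr_right fun hv =>
      ⟨by omega, fun h => h.lt_of_ne (ne_of_mem_of_not_mem hv hj).symm⟩
  simp only [IthVacancyAfter, this]

lemma ithVacancyAfter_iff_of_mem (hj : j ∈ V) :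
    IthVacancyAfter V j i k ↔ k ∈ V.erase j ∧ #{v ∈ V.erase j | v < k} = i - 1 := by
  have : ∀ u, IsLeast {v | v ∈ V ∧ j ≤ v} u ↔ u = j := fun u =>
    ⟨fun h => le_antisymm (h.2 ⟨hj, le_rfl⟩) h.1.2,
      by rintro rfl; exact ⟨⟨hj, le_rfl⟩, fun v hv => hv.2⟩⟩
  simp [IthVacancyAfter, this]

lemma not_ithVacancyAfter_succ_iff_of_lt (hj : j ∈ V) (hk : k ∈ V) (hjk : j < k)
    (hcard : #{v ∈ V.erase j | v < k} = i - 1) :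
    ¬ IthVacancyAfter V (j + 1) i k ↔ ∀ v ∈ V, j < v → k ≤ v := by
  constructor
  · intro hnot v hv hjv
    by_contra! hvk
    obtain ⟨hu, hmin⟩ := isLeast_csInf (s := {v | v ∈ V ∧ j + 1 ≤ v}) ⟨v, hv, hjv⟩
    have huk : sInf {v | v ∈ V ∧ j + 1 ≤ v} < k := (hmin ⟨hv, hjv⟩).trans_lt hvk
    refine hnot ⟨_, ⟨hu, hmin⟩, mem_erase.2 ⟨huk.ne', hk⟩, ?_⟩
    have h₁ := card_filter_erase_lt_add (k := k) hu.1
    have h₂ := card_filter_erase_lt_add (k := k) hj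
    rw [if_pos huk] at h₁
    rw [if_pos hjk] at h₂
    omega
  · rintro hgap ⟨u, ⟨⟨hu, hju⟩, hmin⟩, hku, -⟩
    exact (mem_erase.1 hku).1 (le_antisymm (hgap u hu hju) (hmin ⟨hk, hjk⟩))

lemma not_ithVacancyAfter_succ_iff_of_gt (hk : k ∈ V) (hkj : k < j)
    (hcard : #{v ∈ V | v < k} = i - 1) :
    ¬ IthVacancyAfter V (j + 1) i k ↔ ∀ v ∈ V, v ≤ j := by
  constructor
  · intro hnot v hv
    by_contra! hjv
    obtain ⟨⟨hu, hju⟩, hmin⟩ :=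
      isLeast_csInf (s := {v | v ∈ V ∧ j + 1 ≤ v}) ⟨v, hv, hjv⟩
    refine hnot ⟨_, ⟨⟨hu, hju⟩, hmin⟩, mem_erase.2 ⟨by omega, hk⟩, ?_⟩
    have := card_filter_erase_lt_add (k := k) hu
    rw [if_neg (by omega)] at this
    omega
  · rintro hbelow ⟨u, ⟨⟨hu, hju⟩, -⟩, -⟩
    have := hbelow u hu
    omega

lemma ithVacancyAfter_and_not_succ_iff :
    IthVacancyAfter V j i k ∧ ¬ IthVacancyAfter V (j + 1) i k ↔
      j ∈ V ∧ k ∈ V ∧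
        ((j < k ∧ (∀ v ∈ V, j < v → k ≤ v) ∧ #{v ∈ V | v < j} = i - 1) ∨
          (k < j ∧ (∀ v ∈ V, v ≤ j) ∧ #{v ∈ V | v < k} = i - 1)) := by
  by_cases hj : j ∈ V
  swap
  · simp [ithVacancyAfter_succ_iff_of_notMem hj, hj]
  rw [ithVacancyAfter_iff_of_mem hj, mem_erase]
  rcases lt_trichotomy j k with hjk | rfl | hkj
  · constructor
    · rintro ⟨⟨⟨-, hk⟩, hcard⟩, hnot⟩
      have hgap := (not_ithVacancyAfter_succ_iff_of_lt hj hk hjk hcard).1 hnot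
      exact ⟨hj, hk, Or.inl ⟨hjk, hgap, filter_erase_lt_eq_of_gap hjk hgap ▸ hcard⟩⟩
    · rintro ⟨-, hk, ⟨-, hgap, hcard⟩ | ⟨hkj, -⟩⟩
      · have hcard' := (filter_erase_lt_eq_of_gap hjk hgap).symm ▸ hcard
        exact ⟨⟨⟨hjk.ne', hk⟩, hcard'⟩,
          (not_ithVacancyAfter_succ_iff_of_lt hj hk hjk hcard').2 hgap⟩
      · exact absurd hjk hkj.asymm
  · simp
  · have hcard_eq : #{v ∈ V.erase j | v < k} = #{v ∈ V | v < k} := by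
      simpa [hkj.asymm] using card_filter_erase_lt_add (k := k) hj
    rw [hcard_eq]
    constructor
    · rintro ⟨⟨⟨-, hk⟩, hcard⟩, hnot⟩
      exact ⟨hj, hk,
        Or.inr ⟨hkj, (not_ithVacancyAfter_succ_iff_of_gt hk hkj hcard).1 hnot, hcard⟩⟩
    · rintro ⟨-, hk, ⟨hjk, -⟩ | ⟨-, hbelow, hcard⟩⟩
      · exact absurd hjk hkj.asymm
      · exact ⟨⟨⟨hkj.ne, hk⟩, hcard⟩,
          (not_ithVacancyAfter_succ_iff_of_gt hk hkj hcard).2 hbelow⟩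

end IthVacancyAfter

section Split

variable {a c n s t : ℕ} {A C R : List ℕ}

lemma uncrowded_at_zero : Uncrowded c A 0 := fun _ ht ht0 => absurd ht (by omega)

lemma uncrowded_append_map_add_of_lt (hs : s < a) :
    Uncrowded c (A ++ C.map (· + a)) s ↔ Uncrowded c A s := by
  have : ∀ t, countIcc (C.map (· + a)) t s = 0 := fun t => countIcc_eq_zero fun x hx => by
    obtain ⟨y, -, rfl⟩ := List.mem_map.1 hx
    omega
  simp only [Uncrowded, countIcc_append, this, add_zero]

lemma uncrowded_append_map_add_self (hA : InRange (a - 1) A) (hC : ∀ x ∈ C, 1 ≤ x) :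
    Uncrowded 0 (A ++ C.map (· + a)) a ↔ Uncrowded 1 A (a - 1) := by
  have hcount : ∀ t, countIcc (A ++ C.map (· + a)) t a = countIcc A t (a - 1) := fun t => by
    rw [countIcc_append, countIcc_map_add hC, Nat.sub_self,
      countIcc_eq_zero (l := C) fun x hx => Or.inr (hC x hx), add_zero]
    exact countIcc_congr fun x hx => by have := hA x hx; omega
  simp only [Uncrowded, hcount]
  constructor
  · intro h t ht hta
    have := h t ht (by omega)
    omega
  · intro h t ht hta
    rcases (show t ≤ a - 1 ∨ t = a by omega) with hta | rfl
    · have := h t ht hta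
      omega
    · rw [countIcc_eq_zero fun x hx => Or.inl (by have := hA x hx; omega)]
      omega

lemma uncrowded_append_map_add_of_le (hA : InRange (a - 1) A) (hC : ∀ x ∈ C, 1 ≤ x)
    (hApark : Uncrowded 1 A (a - 1)) (has : a ≤ s) :
    Uncrowded c (A ++ C.map (· + a)) s ↔ Uncrowded c C (s - a) := by
  have hA0 : ∀ t, a ≤ t → countIcc A t (a - 1) = 0 := fun t hat =>
    countIcc_eq_zero fun x hx => Or.inl (by have := hA x hx; omega)
  have hcount : ∀ t, countIcc (A ++ C.map (· + a)) t s =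
      countIcc A t (a - 1) + countIcc C (t - a) (s - a) := fun t => by
    rw [countIcc_append, countIcc_map_add hC]
    congr 1
    exact countIcc_congr fun x hx => by have := hA x hx; omega
  simp only [Uncrowded, hcount]
  constructor
  · intro h t ht hts
    have := h (t + a) (by omega) (by omega)
    rw [Nat.add_sub_cancel, hA0 _ (by omega)] at this
    omega
  · intro h t ht hts
    by_cases hat : a < t
    · have := h (t - a) (by omega) (by omega)
      rw [hA0 t hat.le]
      omega
    have hAt : countIcc A t (a - 1) + t ≤ a := by
      rcases (show t ≤ a - 1 ∨ t = a by omega) with hta | rfl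
      · have := hApark t ht hta
        omega
      · rw [hA0 t le_rfl]
        omega
    have hCt : countIcc C (t - a) (s - a) + a ≤ s + c := by
      rcases has.eq_or_lt with rfl | has
      · rw [countIcc_eq_zero fun x hx => Or.inr (by have := hC x hx; omega)]
        omega
      · have := h 1 le_rfl (by omega)
        rw [countIcc_congr (t' := 1) (s' := s - a) fun x hx => by have := hC x hx; omega]
        omega
    omega

lemma exists_perm_append_map_add (hR : InRange n R) (ha : Uncrowded 0 R a) :
    ∃ A C, InRange (a - 1) A ∧ InRange (n - a) C ∧ R.Perm (A ++ C.map (· + a)) := by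
  have hne : ∀ x ∈ R, x ≠ a := by
    rintro x hx rfl
    have := ha x (hR x hx).1 le_rfl
    have : 0 < countIcc R x x := List.countP_pos_iff.2 ⟨x, hx, by simp⟩
    omega
  refine ⟨R.filter (· < a), (R.filter (a < ·)).map (· - a), fun x hx => ?_, fun x hx => ?_,
    ?_⟩
  · obtain ⟨hxR, hxa⟩ := List.mem_filter.1 hx
    have := hR x hxR
    simp only [decide_eq_true_eq] at hxa
    omega
  · obtain ⟨y, hy, rfl⟩ := List.mem_map.1 hx
    obtain ⟨hyR, hay⟩ := List.mem_filter.1 hy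
    have := hR y hyR
    simp only [decide_eq_true_eq] at hay
    omega
  · have hshift :
        ((R.filter (a < ·)).map (· - a)).map (· + a) = R.filter (fun x => !(x < a)) := by
      rw [List.map_map, List.map_congr_left (g := id), List.map_id]
      · exact List.filter_congr fun x hx => by
          have := hne x hx
          rw [Bool.eq_iff_iff]
          simp only [Bool.not_eq_eq_eq_not, Bool.not_true, decide_eq_true_eq,
            decide_eq_false_iff_not]
          omega
      · intro x hx
        have := (List.mem_filter.1 hx).2
        simp only [decide_eq_true_eq] at this
        simp only [Function.comp_apply, id_eq]
        omega
    rw [hshift]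
    exact (List.filter_append_perm _ R).symm

end Split

lemma vacantSet_eq_empty_iff {N : ℕ} {l : List ℕ} (h : IsPF N l) :
    vacantSet N l = ∅ ↔ l.length = N := by
  rw [← card_eq_zero]
  have := card_vacantSet_add_length h
  omega

section ThreeBlocks

variable {a b c n s : ℕ} {α β γ R : List ℕ}

lemma uncrowded_three_blocks (hα : IsPF (a - 1) α) (hβ : IsPF (b - a - 1) β)
    (hγ : ∀ x ∈ γ, 1 ≤ x) (hab : a < b) :
    Uncrowded c (α ++ β.map (· + a) ++ γ.map (· + b)) s ↔
      if s < a then Uncrowded c α s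
      else if s < b then Uncrowded c β (s - a) else Uncrowded c γ (s - b) := by
  obtain ⟨hαR, hαpark⟩ := isPF_iff.1 hα
  obtain ⟨hβR, hβpark⟩ := isPF_iff.1 hβ
  have hβ1 : ∀ x ∈ β, 1 ≤ x := fun x hx => (hβR x hx).1
  have hD : InRange (b - 1) (α ++ β.map (· + a)) := by
    intro x hx
    rcases List.mem_append.1 hx with hx | hx
    · have := hαR x hx
      omega
    · obtain ⟨y, hy, rfl⟩ := List.mem_map.1 hx
      have := hβR y hy
      omega
  have hDpark : Uncrowded 1 (α ++ β.map (· + a)) (b - 1) := by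
    rw [uncrowded_append_map_add_of_le hαR hβ1 hαpark (by omega),
      show b - 1 - a = b - a - 1 by omega]
    exact hβpark
  split_ifs with hsa hsb
  · rw [uncrowded_append_map_add_of_lt (by omega), uncrowded_append_map_add_of_lt hsa]
  · rw [uncrowded_append_map_add_of_lt hsb,
      uncrowded_append_map_add_of_le hαR hβ1 hαpark (by omega)]
  · rw [uncrowded_append_map_add_of_le hD hγ hDpark (by omega)]

lemma exists_perm_three_blocks (hR : InRange n R) (hpark : Uncrowded 1 R n)
    (ha : Uncrowded 0 R a) (hb : Uncrowded 0 R b) (hab : a < b) (hbn : b ≤ n) :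
    ∃ α β γ, IsPF (a - 1) α ∧ IsPF (b - a - 1) β ∧ IsPF (n - b) γ ∧
      R.Perm (α ++ β.map (· + a) ++ γ.map (· + b)) := by
  obtain ⟨D, γ, hD, hγ, hperm⟩ := exists_perm_append_map_add hR hb
  have hγ1 : ∀ x ∈ γ, 1 ≤ x := fun x hx => (hγ x hx).1
  have hDpark := (uncrowded_append_map_add_self hD hγ1).1 (hperm.uncrowded_iff.1 hb)
  have hγpark :=
    (uncrowded_append_map_add_of_le hD hγ1 hDpark hbn).1 (hperm.uncrowded_iff.1 hpark)
  have hDa := (uncrowded_append_map_add_of_lt hab).1 (hperm.uncrowded_iff.1 ha)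
  obtain ⟨α, β, hα, hβ, hperm'⟩ := exists_perm_append_map_add hD hDa
  have hβ1 : ∀ x ∈ β, 1 ≤ x := fun x hx => (hβ x hx).1
  have hαpark := (uncrowded_append_map_add_self hα hβ1).1 (hperm'.uncrowded_iff.1 hDa)
  have hβpark := (uncrowded_append_map_add_of_le hα hβ1 hαpark (by omega)).1
    (hperm'.uncrowded_iff.1 hDpark)
  rw [show b - 1 - a = b - a - 1 by omega] at hβ hβpark
  exact ⟨α, β, γ, isPF_iff.2 ⟨hα, hαpark⟩, isPF_iff.2 ⟨hβ, hβpark⟩,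
    isPF_iff.2 ⟨hγ, hγpark⟩, hperm.trans (hperm'.append_right _)⟩

lemma mem_vacantSet_three_blocks (hα : IsPF (a - 1) α) (hβ : IsPF (b - a - 1) β)
    (hγ : IsPF (n - b) γ) (hperm : R.Perm (α ++ β.map (· + a) ++ γ.map (· + b)))
    (hab : a < b) :
    s ∈ vacantSet n R ↔ 1 ≤ s ∧ s ≤ n ∧
      if s < a then Uncrowded 0 α s
      else if s < b then Uncrowded 0 β (s - a) else Uncrowded 0 γ (s - b) := by
  rw [mem_vacantSet, hperm.uncrowded_iff,
    uncrowded_three_blocks hα hβ (fun x hx => (hγ.1 x hx).1) hab]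

lemma uncrowded_and_mem_vacantSet_three_blocks (hα : IsPF (a - 1) α) (hβ : IsPF (b - a - 1) β)
    (hγ : IsPF (n - b) γ) (hperm : R.Perm (α ++ β.map (· + a) ++ γ.map (· + b)))
    (ha : 1 ≤ a) (hab : a < b) (hbn : b ≤ n) :
    Uncrowded 1 R n ∧ a ∈ vacantSet n R ∧ b ∈ vacantSet n R := by
  refine ⟨?_, (mem_vacantSet_three_blocks hα hβ hγ hperm hab).2 ⟨ha, by omega, ?_⟩,
    (mem_vacantSet_three_blocks hα hβ hγ hperm hab).2 ⟨by omega, hbn, ?_⟩⟩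
  · rw [hperm.uncrowded_iff, uncrowded_three_blocks hα hβ (fun x hx => (hγ.1 x hx).1) hab,
      if_neg (by omega), if_neg (by omega)]
    exact (isPF_iff.1 hγ).2
  · rw [if_neg (lt_irrefl a), if_pos hab, Nat.sub_self]
    exact uncrowded_at_zero
  · rw [if_neg (by omega), if_neg (lt_irrefl b), Nat.sub_self]
    exact uncrowded_at_zero

lemma filter_vacantSet_lt_three_blocks (hα : IsPF (a - 1) α) (hβ : IsPF (b - a - 1) β)
    (hγ : IsPF (n - b) γ) (hperm : R.Perm (α ++ β.map (· + a) ++ γ.map (· + b)))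
    (hab : a < b)
    (hbn : b ≤ n) :
    {v ∈ vacantSet n R | v < a} = vacantSet (a - 1) α := by
  ext s
  rw [mem_filter, mem_vacantSet_three_blocks hα hβ hγ hperm hab, mem_vacantSet]
  constructor
  · rintro ⟨⟨hs, -, h⟩, hsa⟩
    rw [if_pos hsa] at h
    exact ⟨hs, by omega, h⟩
  · rintro ⟨hs, hsa, h⟩
    exact ⟨⟨hs, by omega, by rwa [if_pos (by omega)]⟩, by omega⟩

lemma forall_vacantSet_gap_iff_three_blocks (hα : IsPF (a - 1) α) (hβ : IsPF (b - a - 1) β)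
    (hγ : IsPF (n - b) γ) (hperm : R.Perm (α ++ β.map (· + a) ++ γ.map (· + b)))
    (hab : a < b)
    (hbn : b ≤ n) :
    (∀ v ∈ vacantSet n R, a < v → b ≤ v) ↔ vacantSet (b - a - 1) β = ∅ := by
  rw [eq_empty_iff_forall_notMem]
  constructor
  · intro hgap w hw
    obtain ⟨hw, hwb, hwβ⟩ := mem_vacantSet.1 hw
    have hwa : w + a ∈ vacantSet n R := by
      refine (mem_vacantSet_three_blocks hα hβ hγ hperm hab).2 ⟨by omega, by omega, ?_⟩
      rwa [if_neg (by omega), if_pos (by omega), Nat.add_sub_cancel]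
    have := hgap _ hwa (by omega)
    omega
  · intro hβV v hv hav
    obtain ⟨hv, hvn, h⟩ := (mem_vacantSet_three_blocks hα hβ hγ hperm hab).1 hv
    by_contra! hvb
    rw [if_neg (by omega), if_pos hvb] at h
    exact hβV (v - a) (mem_vacantSet.2 ⟨by omega, by omega, h⟩)

lemma forall_vacantSet_le_iff_three_blocks (hα : IsPF (a - 1) α) (hβ : IsPF (b - a - 1) β)
    (hγ : IsPF (n - b) γ) (hperm : R.Perm (α ++ β.map (· + a) ++ γ.map (· + b)))
    (hab : a < b) :
    (∀ v ∈ vacantSet n R, v ≤ b) ↔ vacantSet (n - b) γ = ∅ := by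
  rw [eq_empty_iff_forall_notMem]
  constructor
  · intro hbelow w hw
    obtain ⟨hw, hwn, hwγ⟩ := mem_vacantSet.1 hw
    have hwb : w + b ∈ vacantSet n R := by
      refine (mem_vacantSet_three_blocks hα hβ hγ hperm hab).2 ⟨by omega, by omega, ?_⟩
      rwa [if_neg (by omega), if_neg (by omega), Nat.add_sub_cancel]
    have := hbelow _ hwb
    omega
  · intro hγV v hv
    obtain ⟨hv, hvn, h⟩ := (mem_vacantSet_three_blocks hα hβ hγ hperm hab).1 hv
    by_contra! hbv
    rw [if_neg (by omega), if_neg (by omega)] at h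
    exact hγV (v - b) (mem_vacantSet.2 ⟨by omega, by omega, h⟩)

end ThreeBlocks

section Shuffle

variable {m n i j k : ℕ} {R : List ℕ}

lemma vacancies_lt_iff_shuffle (hR : InRange n R) (hlen : R.length + 1 = m) (hi : 1 ≤ i)
    (hj : 1 ≤ j) (hkn : k ≤ n) :
    (Uncrowded 1 R n ∧ j ∈ vacantSet n R ∧ k ∈ vacantSet n R ∧ j < k ∧
        (∀ v ∈ vacantSet n R, j < v → k ≤ v) ∧ #{v ∈ vacantSet n R | v < j} = i - 1) ↔
      (i ≤ j ∧ j + 1 ≤ k ∧ ∃ α β γ : List ℕ,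
        (IsPF (j - 1) α ∧ α.length = j - i) ∧
        (IsPF (k - j - 1) β ∧ β.length = k - j - 1) ∧
        (IsPF (n - k) γ ∧ γ.length = m + i - k) ∧
        R.Perm (α ++ β.map (fun x => x + j) ++ γ.map (fun x => x + k))) := by
  constructor
  · rintro ⟨hpark, hjV, hkV, hjk, hgap, hcard⟩
    obtain ⟨α, β, γ, hα, hβ, hγ, hperm⟩ := exists_perm_three_blocks hR hpark
      (mem_vacantSet.1 hjV).2.2 (mem_vacantSet.1 hkV).2.2 hjk hkn
    rw [filter_vacantSet_lt_three_blocks hα hβ hγ hperm hjk hkn] at hcard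
    rw [forall_vacantSet_gap_iff_three_blocks hα hβ hγ hperm hjk hkn,
      vacantSet_eq_empty_iff hβ] at hgap
    have := card_vacantSet_add_length hα
    have := hperm.length_eq
    simp only [List.length_append, List.length_map] at this
    exact ⟨by omega, hjk, α, β, γ, ⟨hα, by omega⟩, ⟨hβ, hgap⟩, ⟨hγ, by omega⟩,
      hperm⟩
  · rintro ⟨hij, hjk, α, β, γ, ⟨hα, hαlen⟩, ⟨hβ, hβlen⟩, ⟨hγ, -⟩, hperm⟩
    obtain ⟨hpark, hjV, hkV⟩ :=
      uncrowded_and_mem_vacantSet_three_blocks hα hβ hγ hperm hj hjk hkn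
    refine ⟨hpark, hjV, hkV, hjk,
      (forall_vacantSet_gap_iff_three_blocks hα hβ hγ hperm hjk hkn).2
        ((vacantSet_eq_empty_iff hβ).2 hβlen), ?_⟩
    rw [filter_vacantSet_lt_three_blocks hα hβ hγ hperm hjk hkn]
    have := card_vacantSet_add_length hα
    omega

lemma vacancies_gt_iff_shuffle (hR : InRange n R) (hlen : R.length + 1 = m) (hik : i ≤ k)
    (hi : 1 ≤ i) (hjn : j ≤ n) :
    (Uncrowded 1 R n ∧ j ∈ vacantSet n R ∧ k ∈ vacantSet n R ∧ k < j ∧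
        (∀ v ∈ vacantSet n R, v ≤ j) ∧ #{v ∈ vacantSet n R | v < k} = i - 1) ↔
      (n - m - i + k + 1 ≤ j ∧ ∃ α β γ : List ℕ,
        (IsPF (k - 1) α ∧ α.length = k - i) ∧
        (IsPF (j - k - 1) β ∧ β.length = m + i + j - n - k - 1) ∧
        (IsPF (n - j) γ ∧ γ.length = n - j) ∧
        R.Perm (α ++ β.map (fun x => x + k) ++ γ.map (fun x => x + j))) := by
  constructor
  · rintro ⟨hpark, hjV, hkV, hkj, hbelow, hcard⟩
    obtain ⟨α, β, γ, hα, hβ, hγ, hperm⟩ := exists_perm_three_blocks hR hpark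
      (mem_vacantSet.1 hkV).2.2 (mem_vacantSet.1 hjV).2.2 hkj hjn
    rw [filter_vacantSet_lt_three_blocks hα hβ hγ hperm hkj hjn] at hcard
    rw [forall_vacantSet_le_iff_three_blocks hα hβ hγ hperm hkj, vacantSet_eq_empty_iff hγ]
      at hbelow
    have := card_vacantSet_add_length hα
    have := hperm.length_eq
    simp only [List.length_append, List.length_map] at this
    exact ⟨by omega, α, β, γ, ⟨hα, by omega⟩, ⟨hβ, by omega⟩, ⟨hγ, hbelow⟩,
      hperm⟩
  · rintro ⟨hjk, α, β, γ, ⟨hα, hαlen⟩, ⟨hβ, -⟩, ⟨hγ, hγlen⟩, hperm⟩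
    obtain ⟨hpark, hkV, hjV⟩ :=
      uncrowded_and_mem_vacantSet_three_blocks hα hβ hγ hperm (by omega) (by omega) hjn
    refine ⟨hpark, hjV, hkV, by omega,
      (forall_vacantSet_le_iff_three_blocks hα hβ hγ hperm (by omega)).2
        ((vacantSet_eq_empty_iff hγ).2 hγlen), ?_⟩
    rw [filter_vacantSet_lt_three_blocks hα hβ hγ hperm (by omega) hjn]
    have := card_vacantSet_add_length hα
    omega

end Shuffle

end ParkingFunction

theorem stmt_13_general (m n i k : ℕ) (hi1 : 1 ≤ i) (hi2 : i ≤ n - m)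
    (hk1 : i ≤ k) (hk2 : k ≤ m + i)
    (rest : List ℕ) (hrestlen : rest.length = m - 1) (hrest : InRange n rest)
    (j : ℕ) (hj1 : 1 ≤ j) (hjn : j ≤ n) :
    ((IsPF n (j :: rest) ∧ (j :: rest).length = m ∧ kspot n (j :: rest) i = k) ∧
      ¬(IsPF n ((j + 1) :: rest) ∧ ((j + 1) :: rest).length = m ∧
          kspot n ((j + 1) :: rest) i = k)) ↔
    ((i ≤ j ∧ j + 1 ≤ k ∧ ∃ α β γ : List ℕ,
        (IsPF (j - 1) α ∧ α.length = j - i) ∧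
        (IsPF (k - j - 1) β ∧ β.length = k - j - 1) ∧
        (IsPF (n - k) γ ∧ γ.length = m + i - k) ∧
        rest.Perm (α ++ β.map (fun x => x + j) ++ γ.map (fun x => x + k))) ∨
      (n - m - i + k + 1 ≤ j ∧ ∃ α β γ : List ℕ,
        (IsPF (k - 1) α ∧ α.length = k - i) ∧
        (IsPF (j - k - 1) β ∧ β.length = m + i + j - n - k - 1) ∧
        (IsPF (n - j) γ ∧ γ.length = n - j) ∧
        rest.Perm (α ++ β.map (fun x => x + k) ++ γ.map (fun x => x + j)))) := by
  rcases Nat.eq_zero_or_pos m with rfl | hm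
  · constructor
    · rintro ⟨⟨-, hlen, -⟩, -⟩
      simp at hlen
    · rintro (⟨hij, hjk, -⟩ | ⟨hjk, -⟩) <;> omega
  have hlen : rest.length + 1 = m := by omega
  simp only [List.length_cons, hlen, true_and]
  have hregroup : ∀ p q r : Prop, (p ∧ q) ∧ ¬(p ∧ r) ↔ p ∧ q ∧ ¬r := by tauto
  rw [ParkingFunction.isPF_cons_and_kspot_iff hrest hj1 (by omega),
    ParkingFunction.isPF_cons_and_kspot_iff hrest (by omega) (by omega), hregroup,
    ParkingFunction.ithVacancyAfter_and_not_succ_iff]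
  simp only [and_or_left]
  rw [ParkingFunction.vacancies_lt_iff_shuffle hrest hlen hi1 hj1 (by omega),
    ParkingFunction.vacancies_gt_iff_shuffle hrest hlen hk1 hi1 hjn]

/-- Theorem 3.6. Characterization of the maximal first preference `j`
compatible with `π_2, …, π_m` and with the `i`-th unattempted spot being `k`, via
parking function multi-shuffles. -/
theorem stmt_13 (m n i k : ℕ) (hmn : m < n) (hi1 : 1 ≤ i) (hi2 : i ≤ n - m)
    (hk1 : i ≤ k) (hk2 : k ≤ m + i)
    (rest : List ℕ) (hrestlen : rest.length = m - 1) (hrest : InRange n rest)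
    (j : ℕ) (hj1 : 1 ≤ j) (hjn : j ≤ n) :
    ((IsPF n (j :: rest) ∧ (j :: rest).length = m ∧ kspot n (j :: rest) i = k) ∧
      ¬(IsPF n ((j + 1) :: rest) ∧ ((j + 1) :: rest).length = m ∧
          kspot n ((j + 1) :: rest) i = k)) ↔
    ((i ≤ j ∧ j + 1 ≤ k ∧ ∃ α β γ : List ℕ,
        (IsPF (j - 1) α ∧ α.length = j - i) ∧
        (IsPF (k - j - 1) β ∧ β.length = k - j - 1) ∧
        (IsPF (n - k) γ ∧ γ.length = m + i - k) ∧
        rest.Perm (α ++ β.map (fun x => x + j) ++ γ.map (fun x => x + k))) ∨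
      (n - m - i + k + 1 ≤ j ∧ ∃ α β γ : List ℕ,
        (IsPF (k - 1) α ∧ α.length = k - i) ∧
        (IsPF (j - k - 1) β ∧ β.length = m + i + j - n - k - 1) ∧
        (IsPF (n - j) γ ∧ γ.length = n - j) ∧
        rest.Perm (α ++ β.map (fun x => x + k) ++ γ.map (fun x => x + j)))) :=
  stmt_13_general m n i k hi1 hi2 hk1 hk2 rest hrestlen hrest j hj1 hjn
end

section
/- Let 0 ≤ m ≤ n be integers and a, b ∈ {1,…,n}^m. Then: (1) a ∈ PF(m,n) if and only if (a, (n,…,n)) ∈ IPF(m,n); and (2) (a,b) ∈ IPF(m,n) if and only if a ∈ PF(m,n) and τ(a) ≤_C b, i.e., τ_i(a) ≤ b_i for all 1 ≤ i ≤ m. -/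
/-!
Let `F(i)` be the number of free spots in `[i, n]`. Parking the car with preference `p` at
the first free spot `s ≥ p` lowers `F(i)` by one exactly for `i ≤ s`, while `F` is constant on
`[p, s]`; by induction on the cars, classical parking therefore succeeds iff for every `i` at most
`F(i)` cars prefer a spot `≥ i`. From an empty lot this is the inequality defining `PF(m, n)`.

For interval parking with all `bᵢ ≤ n`, the first free spot of `[p, q]` is the first free spot
of `[p, n]` as long as the latter is `≤ q`. So the interval process runs in lockstep with the
classical one and fails exactly when some car's classical spot exceeds its `bᵢ`.
-/

open Finset

theorem List.Forall₂.exists_mem_left {α β : Type*} {R : α → β → Prop} {l₁ : List α} {l₂ : List β}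
    (h : List.Forall₂ R l₁ l₂) {y : β} (hy : y ∈ l₂) : ∃ x ∈ l₁, R x y := by
  induction h with
  | nil => simp at hy
  | cons hxy _ ih =>
    rcases List.mem_cons.1 hy with rfl | hy
    · exact ⟨_, List.mem_cons_self, hxy⟩
    · obtain ⟨x, hx, hR⟩ := ih hy
      exact ⟨x, List.mem_cons_of_mem _ hx, hR⟩

theorem List.Forall₂.trans_le {α : Type*} [Preorder α] {l₁ l₂ l₃ : List α}
    (h₁₂ : List.Forall₂ (· ≤ ·) l₁ l₂) (h₂₃ : List.Forall₂ (· ≤ ·) l₂ l₃) :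
    List.Forall₂ (· ≤ ·) l₁ l₃ := by
  induction h₁₂ generalizing l₃ with
  | nil => exact h₂₃
  | cons hab _ ih =>
    cases h₂₃ with
    | cons hbc h => exact .cons (hab.trans hbc) (ih h)

theorem List.zip_replicate_length {α β : Type*} (l : List α) (b : β) :
    l.zip (List.replicate l.length b) = l.map (·, b) := by
  induction l with
  | nil => rfl
  | cons x l ih => simp [List.replicate_succ, ih]

theorem Finset.exists_isLeast_and_iff {α : Type*} [LinearOrder α] {S : Finset α} {P : α → Prop} :
    (∃ s, IsLeast (S : Set α) s ∧ P s) ↔ ∃ h : S.Nonempty, P (S.min' h) := by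
  constructor
  · rintro ⟨s, hs, hP⟩
    have hne : S.Nonempty := ⟨s, hs.1⟩
    exact ⟨hne, (S.isLeast_min' hne).unique hs ▸ hP⟩
  · rintro ⟨h, hP⟩
    exact ⟨_, S.isLeast_min' h, hP⟩

theorem isLeast_Icc_sdiff_iff {α : Type*} [LinearOrder α] [LocallyFiniteOrder α] {p q n s : α}
    {occ : Finset α} (hq : q ≤ n) :
    IsLeast (↑(Icc p q \ occ) : Set α) s ↔ IsLeast (↑(Icc p n \ occ) : Set α) s ∧ s ≤ q := by
  simp only [IsLeast, lowerBounds, coe_sdiff, coe_Icc, Set.mem_sdiff, Set.mem_Icc,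
    Set.mem_ofPred_eq]
  constructor
  · rintro ⟨⟨⟨hps, hsq⟩, hs⟩, hmin⟩
    refine ⟨⟨⟨⟨hps, hsq.trans hq⟩, hs⟩, fun x ⟨⟨hpx, hxn⟩, hx⟩ => ?_⟩, hsq⟩
    by_cases hxq : x ≤ q
    · exact hmin ⟨⟨hpx, hxq⟩, hx⟩
    · exact hsq.trans (not_le.1 hxq).le
  · rintro ⟨⟨⟨⟨hps, -⟩, hs⟩, hmin⟩, hsq⟩
    exact ⟨⟨⟨hps, hsq⟩, hs⟩, fun x ⟨⟨hpx, hxq⟩, hx⟩ => hmin ⟨⟨hpx, hxq.trans hq⟩, hx⟩⟩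

section Parking

variable {rest : List (ℕ × ℕ)} {occ : Finset ℕ}

-- `IsLeast` replaces the `min'` of `parkAux`, whose nonemptiness proof would otherwise leak into
-- every statement about a parking step.
theorem parkAux_cons_eq_some {p q : ℕ} {t : List ℕ} :
    parkAux ((p, q) :: rest) occ = some t ↔
      ∃ s, IsLeast (↑(Icc p q \ occ) : Set ℕ) s ∧
        ∃ t', parkAux rest (insert s occ) = some t' ∧ t = s :: t' := by
  rw [Finset.exists_isLeast_and_iff, parkAux]
  split_ifs with h
  · simp [h, eq_comm]
  · simp [h]

theorem parkAux_cons_isSome_iff {p q : ℕ} :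
    (parkAux ((p, q) :: rest) occ).isSome ↔
      ∃ s, IsLeast (↑(Icc p q \ occ) : Set ℕ) s ∧ (parkAux rest (insert s occ)).isSome := by
  rw [Finset.exists_isLeast_and_iff, parkAux]
  split_ifs with h
  · simp [h]
  · simp [h]

theorem parkAux_zip_eq_some_iff {n : ℕ} {a b t : List ℕ} (hlen : a.length = b.length)
    (hb : ∀ x ∈ b, x ≤ n) :
    parkAux (a.zip b) occ = some t ↔
      parkAux (a.map (·, n)) occ = some t ∧ List.Forall₂ (· ≤ ·) t b := by
  induction a generalizing b t occ with
  | nil =>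
    obtain rfl : b = [] := List.length_eq_zero_iff.1 hlen.symm
    simp [parkAux, eq_comm]
  | cons p a ih =>
    obtain ⟨q, b, rfl⟩ := List.exists_cons_of_length_eq_add_one hlen.symm
    have hq : q ≤ n := hb q List.mem_cons_self
    have hlen' : a.length = b.length := by simpa using hlen
    have hb' : ∀ x ∈ b, x ≤ n := fun x hx => hb x (List.mem_cons_of_mem _ hx)
    simp only [List.zip_cons_cons, List.map_cons, parkAux_cons_eq_some, ih hlen' hb',
      isLeast_Icc_sdiff_iff hq]
    constructor
    · rintro ⟨s, ⟨hs, hsq⟩, t, ⟨ht, htb⟩, rfl⟩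
      exact ⟨⟨s, hs, t, ht, rfl⟩, .cons hsq htb⟩
    · rintro ⟨⟨s, hs, t, ht, rfl⟩, htb⟩
      obtain ⟨hsq, htb⟩ := List.forall₂_cons.1 htb
      exact ⟨s, ⟨hs, hsq⟩, t, ⟨ht, htb⟩, rfl⟩

theorem forall₂_le_of_parkAux_map_eq_some {n : ℕ} {a t : List ℕ}
    (h : parkAux (a.map (·, n)) occ = some t) : List.Forall₂ (· ≤ ·) a t := by
  induction a generalizing t occ with
  | nil => simp_all [parkAux]
  | cons p a ih =>
    obtain ⟨s, hs, t, ht, rfl⟩ := parkAux_cons_eq_some.1 h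
    exact .cons (mem_Icc.1 (mem_sdiff.1 hs.1).1).1 (ih ht)

end Parking

theorem forall_countP_le_card_insert_iff {n p s : ℕ} {occ : Finset ℕ} {l : List ℕ}
    (hs : IsLeast (↑(Icc p n \ occ) : Set ℕ) s) :
    (∀ i, l.countP (i ≤ ·) ≤ #(Icc i n \ insert s occ)) ↔
      ∀ i, (p :: l).countP (i ≤ ·) ≤ #(Icc i n \ occ) := by
  obtain ⟨hs_mem, hs_min⟩ := hs
  obtain ⟨⟨hps, hsn⟩, hs_free⟩ : (p ≤ s ∧ s ≤ n) ∧ s ∉ occ := by simpa using hs_mem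
  have hcard : ∀ i, #(Icc i n \ insert s occ) + (if i ≤ s then 1 else 0) = #(Icc i n \ occ) := by
    intro i
    rw [sdiff_insert]
    split_ifs with hi
    · exact card_erase_add_one (by simp [hi, hsn, hs_free])
    · rw [erase_eq_of_notMem (by simp; omega), Nat.add_zero]
  have hflat : ∀ i, p ≤ i → i ≤ s → #(Icc i n \ occ) = #(Icc p n \ occ) := by
    intro i hpi his
    congr 1
    ext x
    simp only [mem_sdiff, mem_Icc]
    constructor
    · rintro ⟨⟨hix, hxn⟩, hx⟩
      exact ⟨⟨hpi.trans hix, hxn⟩, hx⟩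
    · rintro ⟨⟨hpx, hxn⟩, hx⟩
      exact ⟨⟨his.trans (hs_min (by simp [hpx, hxn, hx])), hxn⟩, hx⟩
  have hmono : ∀ i, p ≤ i → l.countP (i ≤ ·) ≤ l.countP (p ≤ ·) := fun i hpi =>
    List.countP_mono_left fun x _ hx => by simp only [decide_eq_true_eq] at hx ⊢; omega
  simp only [List.countP_cons, decide_eq_true_eq]
  constructor
  · intro H i
    have := H i
    have := hcard i
    split_ifs at * <;> omega
  · intro H i
    have hi := H i
    have hc := hcard i
    by_cases hpi : p < i ∧ i ≤ s
    · obtain ⟨hpi, his⟩ := hpi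
      have hp : l.countP (p ≤ ·) + 1 ≤ #(Icc p n \ occ) := by simpa using H p
      rw [if_pos his] at hc
      have := hflat i hpi.le his
      have := hmono i hpi.le
      omega
    · split_ifs at hi hc <;> omega

theorem parkAux_map_isSome_iff {n : ℕ} {l : List ℕ} {occ : Finset ℕ} :
    (parkAux (l.map (·, n)) occ).isSome ↔ ∀ i, l.countP (i ≤ ·) ≤ #(Icc i n \ occ) := by
  induction l generalizing occ with
  | nil => simp [parkAux]
  | cons p l ih =>
    rw [List.map_cons, parkAux_cons_isSome_iff]
    by_cases h : (Icc p n \ occ).Nonempty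
    · have hs := (Icc p n \ occ).isLeast_min' h
      rw [← forall_countP_le_card_insert_iff hs, ← ih]
      exact ⟨fun ⟨s, hs', hsome⟩ => hs.unique hs' ▸ hsome, fun hsome => ⟨_, hs, hsome⟩⟩
    · simp only [not_nonempty_iff_eq_empty] at h
      refine iff_of_false (fun ⟨_, hs, _⟩ => by simpa [h] using hs.1) fun H => ?_
      have := H p
      simp [h] at this

theorem isPF_iff_forall_countP_le {n : ℕ} {a : List ℕ} (ha : InRange n a) :
    IsPF n a ↔ ∀ i, a.countP (i ≤ ·) ≤ n + 1 - i := by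
  have hsplit : ∀ i, a.countP (· ≤ i) + a.countP (i + 1 ≤ ·) = a.length := fun i => by
    rw [List.length_eq_countP_add_countP (· ≤ i)]
    congr 1
    exact List.countP_congr fun x _ => by simp only [decide_eq_true_eq]; omega
  have hlow : a.countP (· ≤ 0) = 0 :=
    List.countP_eq_zero.2 fun x hx => by simpa using Nat.pos_iff_ne_zero.1 (ha x hx).1
  have hhigh : ∀ i, n < i → a.countP (i ≤ ·) = 0 := fun i hi =>
    List.countP_eq_zero.2 fun x hx => by simpa using (ha x hx).2.trans_lt hi
  simp only [IsPF, ha, true_and]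
  constructor
  · intro H i
    rcases i with _ | i
    · have := H 0 (Nat.zero_le _)
      rw [List.countP_eq_length.2 fun x _ => by simp]
      omega
    · by_cases hi : i ≤ n
      · have := H i hi
        have := hsplit i
        omega
      · rw [hhigh _ (by omega)]
        exact Nat.zero_le _
  · intro H i _
    have := H (i + 1)
    have := hsplit i
    omega

theorem isPF_iff_outcome_isSome {n : ℕ} {a : List ℕ} (ha : InRange n a) :
    IsPF n a ↔ (outcome n a).isSome := by
  rw [isPF_iff_forall_countP_le ha, outcome, parkAux_map_isSome_iff]
  simp only [sdiff_empty, Nat.card_Icc]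

theorem outcome_forall₂_le_replicate {n : ℕ} {a t : List ℕ} (ht : outcome n a = some t) :
    List.Forall₂ (· ≤ ·) t (List.replicate a.length n) := by
  have h := parkAux_zip_eq_some_iff (occ := ∅) (a := a) (b := List.replicate a.length n) (t := t)
    (by simp) fun x hx => (List.eq_of_mem_replicate hx).le
  rw [List.zip_replicate_length] at h
  exact (h.1 ht).2

theorem isIPF_iff_of_le {n : ℕ} {a b : List ℕ} (ha : InRange n a) (hb : ∀ x ∈ b, x ≤ n) :
    IsIPF n a b ↔ IsPF n a ∧ ∃ t, outcome n a = some t ∧ List.Forall₂ (· ≤ ·) t b := by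
  rw [isPF_iff_outcome_isSome ha]
  constructor
  · rintro ⟨hlen, -, -, -, hsome⟩
    obtain ⟨t, ht⟩ := Option.isSome_iff_exists.1 hsome
    obtain ⟨ht, htb⟩ : outcome n a = some t ∧ _ := (parkAux_zip_eq_some_iff hlen hb).1 ht
    exact ⟨by simp [ht], t, ht, htb⟩
  · rintro ⟨-, t, ht, htb⟩
    have hab := (forall₂_le_of_parkAux_map_eq_some ht).trans_le htb
    have hpos : ∀ y ∈ b, 1 ≤ y := fun y hy =>
      let ⟨x, hx, hxy⟩ := hab.exists_mem_left hy
      (ha x hx).1.trans hxy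
    refine ⟨hab.length_eq, ha, fun y hy => ⟨hpos y hy, hb y hy⟩, hab, ?_⟩
    rw [(parkAux_zip_eq_some_iff hab.length_eq hb).2 ⟨ht, htb⟩]
    rfl

theorem stmt_17_general (m n : ℕ) (a b : List ℕ)
    (halen : a.length = m)
    (ha : InRange n a) (hb : InRange n b) :
    (IsPF n a ↔ IsIPF n a (List.replicate m n)) ∧
    (IsIPF n a b ↔
      IsPF n a ∧ ∃ t : List ℕ, outcome n a = some t ∧ List.Forall₂ (· ≤ ·) t b) := by
  refine ⟨?_, isIPF_iff_of_le ha fun x hx => (hb x hx).2⟩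
  rw [isIPF_iff_of_le ha fun x hx => (List.eq_of_mem_replicate hx).le]
  refine ⟨fun hpf => ⟨hpf, ?_⟩, And.left⟩
  obtain ⟨t, ht⟩ := Option.isSome_iff_exists.1 ((isPF_iff_outcome_isSome ha).1 hpf)
  exact ⟨t, ht, halen ▸ outcome_forall₂_le_replicate ht⟩

/-- Proposition 4.1. (1) `a ∈ PF(m,n)` iff `(a, (n,…,n)) ∈ IPF(m,n)`;
(2) `(a,b) ∈ IPF(m,n)` iff `a ∈ PF(m,n)` and the parking outcome `τ(a)` satisfies
`τ(a) ≤_C b` componentwise. -/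
theorem stmt_17 (m n : ℕ) (hmn : m ≤ n) (a b : List ℕ)
    (halen : a.length = m) (hblen : b.length = m)
    (ha : InRange n a) (hb : InRange n b) :
    (IsPF n a ↔ IsIPF n a (List.replicate m n)) ∧
    (IsIPF n a b ↔
      IsPF n a ∧ ∃ t : List ℕ, outcome n a = some t ∧ List.Forall₂ (· ≤ ·) t b) :=
  stmt_17_general m n a b halen ha hb
end
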